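/- arXiv:2312.15827 — 5 statements merged into one kernel-verified Lean document; each statement's English description precedes it below -/
import Mathlib

section
/- Let X be a 2-connected finite topological graph and let x, y ∈ X be distinct points. Then the map ι_{x,y} : P_x → π₀(X ∖ {x, y}) is surjective. Consequently, the number of connected components of X ∖ {x, y} is at most deg(x), and ι_{x,y} is bijective if and only if deg(x) equals the number of connected components of X ∖ {x, y}. -/
open Set Topology

namespace TreesOfGraphs

/-- Gluing relation defining the geometric realization of a finite multigraph:
each endpoint of each edge interval is glued to its assigned vertex. -/
def GraphGlueRel (V E : Type) (ends : E → V × V) :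
    (V ⊕ E × unitInterval) → (V ⊕ E × unitInterval) → Prop := fun a b =>
  (∃ e : E, a = Sum.inl (ends e).1 ∧ b = Sum.inr (e, 0)) ∨
  (∃ e : E, a = Sum.inl (ends e).2 ∧ b = Sum.inr (e, 1))

/-- The geometric realization of the finite multigraph with vertex type `V`,
edge type `E` and endpoint assignment `ends`. -/
def GraphRealization (V E : Type) (ends : E → V × V) : Type :=
  Quot (GraphGlueRel V E ends)

noncomputable instance (V E : Type) (ends : E → V × V) :
    TopologicalSpace (GraphRealization V E ends) :=
  letI : TopologicalSpace V := ⊥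
  letI : TopologicalSpace E := ⊥
  inferInstanceAs (TopologicalSpace (Quot (GraphGlueRel V E ends)))

/-- A topological space is a finite topological graph if it is homeomorphic to the
geometric realization of a finite multigraph. -/
def IsFiniteTopGraph (X : Type*) [TopologicalSpace X] : Prop :=
  ∃ (V E : Type) (_ : Fintype V) (_ : Fintype E) (ends : E → V × V),
    Nonempty (X ≃ₜ GraphRealization V E ends)

/-- The number of connected components of a subset `S` of a topological space. -/
noncomputable def numComponents {X : Type*} [TopologicalSpace X] (S : Set X) : ℕ :=
  Nat.card (ConnectedComponents ↥S)

/-- `DegreeAt x n` : every sufficiently small connected open neighbourhood `U` of `x`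
satisfies that `U \ {x}` has exactly `n` connected components. -/
def DegreeAt {X : Type*} [TopologicalSpace X] (x : X) (n : ℕ) : Prop :=
  ∃ U₀ ∈ 𝓝 x, ∀ U : Set X, U ⊆ U₀ → IsOpen U → x ∈ U → IsConnected U →
    numComponents (U \ {x}) = n

open Classical in
/-- The degree of a point of a (finite topological graph) space. -/
noncomputable def degree {X : Type*} [TopologicalSpace X] (x : X) : ℕ :=
  if h : ∃ n, DegreeAt x n then h.choose else 0

/-- A space is 2-connected if it is nonempty, has more than one point, is connected,
and has no cutpoint. -/
def TwoConnected (X : Type*) [TopologicalSpace X] : Prop :=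
  Nonempty X ∧ Nontrivial X ∧ ConnectedSpace X ∧
    ∀ p : X, IsConnected ({p}ᶜ : Set X)

/-- Two points are twins if they are distinct, have equal degrees, and their common degree
equals the number of connected components of the complement of the pair. -/
def AreTwins {X : Type*} [TopologicalSpace X] (x y : X) : Prop :=
  x ≠ y ∧ degree x = degree y ∧ numComponents (({x, y} : Set X)ᶜ) = degree x

/-- A twin graph is a 2-connected finite topological graph in which every point has a twin. -/
def IsTwinGraph (X : Type*) [TopologicalSpace X] : Prop :=
  IsFiniteTopGraph X ∧ TwoConnected X ∧ ∀ x : X, ∃ y : X, AreTwins x y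

/-- An essential twin pair: a pair of twins, both of degree at least 3. -/
def IsEssentialTwinPair {X : Type*} [TopologicalSpace X] (x y : X) : Prop :=
  AreTwins x y ∧ 3 ≤ degree x ∧ 3 ≤ degree y

/-- The map on connected components induced by an inclusion of subsets. -/
noncomputable def inclComponentsMap {X : Type*} [TopologicalSpace X] {S T : Set X}
    (h : S ⊆ T) : ConnectedComponents ↥S → ConnectedComponents ↥T :=
  Continuous.connectedComponentsLift
    (ConnectedComponents.continuous_coe.comp (continuous_inclusion h))

/-- A sufficiently small connected open neighbourhood of `x`, suitable for reading off
the local branches of the space at `x`: arbitrarily small connected open neighbourhoods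
of `x` have their punctured components in bijection (via inclusion)
with those of the punctured carrier. -/
structure BranchNbhd {X : Type*} [TopologicalSpace X] (x : X) where
  carrier : Set X
  isOpen' : IsOpen carrier
  mem' : x ∈ carrier
  conn' : IsConnected carrier
  stable' : ∀ V ∈ 𝓝 x, ∃ W : Set X, ∃ hWc : W ⊆ carrier, W ⊆ V ∧ IsOpen W ∧ x ∈ W ∧
    IsConnected W ∧ Function.Bijective
      (inclComponentsMap (Set.diff_subset_diff_left hWc : W \ {x} ⊆ carrier \ {x}))

/-- The blow-up divisor at `x` (relative to the branch neighbourhood `B`): the set of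
local branches of the space at `x`. -/
def Divisor {X : Type*} [TopologicalSpace X] {x : X} (B : BranchNbhd x) : Type _ :=
  ConnectedComponents ↥(B.carrier \ {x})

/-- The map sending each local branch at `x` to the connected component of `X ∖ {x, y}`
containing it. -/
noncomputable def iotaMap {X : Type*} [TopologicalSpace X] {x : X} (B : BranchNbhd x)
    (y : X) (hy : y ∉ B.carrier) :
    Divisor B → ConnectedComponents ↥(({x, y} : Set X)ᶜ) :=
  inclComponentsMap (fun z hz => by
    rcases hz with ⟨hzB, hzx⟩
    simp only [Set.mem_compl_iff, Set.mem_insert_iff, Set.mem_singleton_iff, not_or]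
    exact ⟨by simpa using hzx, fun h => hy (h ▸ hzB)⟩)

/-! A component `C` of `X ∖ {x, y}` is open (graphs are locally connected) and closed in
`X ∖ {x, y}`. As `X ∖ {y}`, which is `C` plus the rest of `X ∖ {x, y}` plus the point `x`, is
connected, `C` must accumulate at `x`, so it meets the punctured neighbourhood `B ∖ {x}`: this
is surjectivity. The same argument inside small connected neighbourhoods `U ⊆ B` of `x` shows
that `deg x` is the number of local branches. That number is finite because every point of a
graph has arbitrarily small connected open stars whose punctures are finitely many half-open
edge segments. The remaining claims are counting statements about a surjection out of a finite
set. -/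

section Components

variable {X : Type*} [TopologicalSpace X]

theorem ConnectedComponents.mk_eq_mk_of_mem_connectedComponentIn {S : Set X} {z w : X}
    (hz : z ∈ S) (hw : w ∈ connectedComponentIn S z) :
    (ConnectedComponents.mk ⟨w, connectedComponentIn_subset S z hw⟩ : ConnectedComponents S) =
      ConnectedComponents.mk ⟨z, hz⟩ := by
  rw [connectedComponentIn_eq_image hz] at hw
  obtain ⟨w', hw', rfl⟩ := hw
  exact ConnectedComponents.coe_eq_coe'.mpr hw'

theorem inclComponentsMap_mk {S T : Set X} (h : S ⊆ T) (z : S) :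
    inclComponentsMap h (ConnectedComponents.mk z) = ConnectedComponents.mk (inclusion h z) :=
  Continuous.connectedComponentsLift_apply_coe _ z

theorem inclComponentsMap_comp {S T R : Set X} (hST : S ⊆ T) (hTR : T ⊆ R) :
    inclComponentsMap hTR ∘ inclComponentsMap hST = inclComponentsMap (hST.trans hTR) := by
  ext c
  obtain ⟨z, rfl⟩ := ConnectedComponents.surjective_coe c
  rfl

theorem finite_connectedComponents_of_eq_sUnion {S : Set X} {𝒯 : Set (Set X)} (h𝒯 : 𝒯.Finite)
    (hpre : ∀ T ∈ 𝒯, IsPreconnected T) (hS : S = ⋃₀ 𝒯) : Finite (ConnectedComponents S) := by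
  have hcover : (univ : Set (ConnectedComponents S)) ⊆
      ⋃ T ∈ 𝒯, ConnectedComponents.mk '' (Subtype.val ⁻¹' T) := by
    rintro c -
    obtain ⟨⟨z, hzS⟩, rfl⟩ := ConnectedComponents.surjective_coe c
    obtain ⟨T, hT, hzT⟩ := mem_sUnion.mp (hS ▸ hzS)
    exact mem_biUnion hT ⟨⟨z, hzS⟩, hzT, rfl⟩
  have hsingle : ∀ T ∈ 𝒯, (ConnectedComponents.mk '' (Subtype.val ⁻¹' T : Set S)).Subsingleton := by
    intro T hT
    have hTS : T ⊆ S := hS ▸ subset_sUnion_of_mem hT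
    have : IsPreconnected (Subtype.val ⁻¹' T : Set S) := by
      rw [← IsInducing.subtypeVal.isPreconnected_image, Subtype.image_preimage_coe,
        inter_eq_self_of_subset_right hTS]
      exact hpre T hT
    exact (this.image _ ConnectedComponents.continuous_coe.continuousOn).subsingleton
  exact finite_univ_iff.mp ((h𝒯.biUnion fun T hT => (hsingle T hT).finite).subset hcover)

theorem mem_closure_of_isPreconnected_insert {x : X} {T C : Set X}
    (hconn : IsPreconnected (insert x T)) (hxT : x ∉ T) (hCo : IsOpen C) (hCT : C ⊆ T)
    (hCcl : closure C ∩ T ⊆ C) (hCne : C.Nonempty) : x ∈ closure C := by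
  by_contra hx
  have hcover : insert x T ⊆ C ∪ (closure C)ᶜ := by
    rintro t (rfl | htT)
    · exact Or.inr hx
    · by_cases ht : t ∈ closure C
      · exact Or.inl (hCcl ⟨ht, htT⟩)
      · exact Or.inr ht
  obtain ⟨t, -, htC, htC'⟩ := hconn C (closure C)ᶜ hCo isClosed_closure.isOpen_compl hcover
    (hCne.mono fun c hc => ⟨mem_insert_of_mem x (hCT hc), hc⟩) ⟨x, mem_insert x T, hx⟩
  exact htC' (subset_closure htC)

theorem inclComponentsMap_surjective [LocallyConnectedSpace X] {x : X} {S T : Set X}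
    (hS : S ∈ 𝓝[≠] x) (hT : IsOpen T) (hxT : x ∉ T) (hconn : IsPreconnected (insert x T))
    (hST : S ⊆ T) : Function.Surjective (inclComponentsMap hST) := by
  intro c
  obtain ⟨⟨z, hz⟩, rfl⟩ := ConnectedComponents.surjective_coe c
  set C := connectedComponentIn T z
  have hCcl : closure C ∩ T ⊆ C :=
    (isPreconnected_connectedComponentIn.subset_closure
      (subset_inter subset_closure (connectedComponentIn_subset T z)) inter_subset_left
      ).subset_connectedComponentIn ⟨subset_closure (mem_connectedComponentIn hz), hz⟩
      inter_subset_right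
  have hxC : x ∈ closure C := mem_closure_of_isPreconnected_insert hconn hxT
    hT.connectedComponentIn (connectedComponentIn_subset T z) hCcl ⟨z, mem_connectedComponentIn hz⟩
  have hSC : S ∈ 𝓝[C] x := nhdsWithin_mono x
    (fun w hw (hwx : w = x) => hxT (hwx ▸ connectedComponentIn_subset T z hw)) hS
  obtain ⟨w, hwS, hwC⟩ := (mem_closure_iff_nhdsWithin_neBot.mp hxC).nonempty_of_mem
    (Filter.inter_mem hSC self_mem_nhdsWithin)
  exact ⟨ConnectedComponents.mk ⟨w, hwS⟩, by
    rw [inclComponentsMap_mk]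
    exact ConnectedComponents.mk_eq_mk_of_mem_connectedComponentIn hz hwC⟩

theorem inclComponentsMap_sdiff_singleton_surjective [LocallyConnectedSpace X] [T1Space X]
    {x : X} {W U : Set X} (hW : W ∈ 𝓝 x) (hU : IsOpen U) (hUc : IsPreconnected U) (hxU : x ∈ U)
    (hWU : W \ {x} ⊆ U \ {x}) : Function.Surjective (inclComponentsMap hWU) := by
  refine inclComponentsMap_surjective (sdiff_mem_nhdsWithin_compl hW _)
    (hU.sdiff isClosed_singleton) (fun hx => hx.2 rfl) ?_ hWU
  rwa [insert_sdiff_singleton, insert_eq_of_mem hxU]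

end Components

section Degree

variable {X : Type*} [TopologicalSpace X] [LocallyConnectedSpace X]

theorem DegreeAt.unique {x : X} {m n : ℕ} (hm : DegreeAt x m) (hn : DegreeAt x n) : m = n := by
  obtain ⟨U₀, hU₀, Hm⟩ := hm
  obtain ⟨U₁, hU₁, Hn⟩ := hn
  obtain ⟨U, hU, hUo, hxU, hUc⟩ := locallyConnectedSpace_iff_subsets_isOpen_isConnected.mp
    ‹_› x (U₀ ∩ U₁) (Filter.inter_mem hU₀ hU₁)
  rw [← Hm U (hU.trans inter_subset_left) hUo hxU hUc,
    Hn U (hU.trans inter_subset_right) hUo hxU hUc]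

variable [T1Space X]

theorem degreeAt_card_divisor {x : X} (B : BranchNbhd x) : DegreeAt x (Nat.card (Divisor B)) := by
  refine ⟨B.carrier, B.isOpen'.mem_nhds B.mem', fun U hUB hUo hxU hUc => ?_⟩
  obtain ⟨W, hWB, hWU, hWo, hxW, -, hbij⟩ := B.stable' U (hUo.mem_nhds hxU)
  have hWU' : W \ {x} ⊆ U \ {x} := sdiff_subset_sdiff_left hWU
  have hUB' : U \ {x} ⊆ B.carrier \ {x} := sdiff_subset_sdiff_left hUB
  have hsurj : Function.Surjective (inclComponentsMap hWU') :=
    inclComponentsMap_sdiff_singleton_surjective (hWo.mem_nhds hxW) hUo hUc.isPreconnected hxU hWU'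
  have hinj : Function.Injective (inclComponentsMap hWU') := by
    rw [← inclComponentsMap_comp hWU' hUB'] at hbij
    exact hbij.injective.of_comp
  exact (Nat.card_eq_of_bijective _ ⟨hinj, hsurj⟩).symm.trans (Nat.card_eq_of_bijective _ hbij)

theorem degree_eq_card_divisor {x : X} (B : BranchNbhd x) : degree x = Nat.card (Divisor B) := by
  have hex : ∃ n, DegreeAt x n := ⟨_, degreeAt_card_divisor B⟩
  rw [degree, dif_pos hex]
  exact hex.choose_spec.unique (degreeAt_card_divisor B)

end Degree

def StarNhdsBasis (X : Type*) [TopologicalSpace X] : Prop :=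
  ∀ x : X, ∀ S ∈ 𝓝 x, ∃ W ⊆ S, IsOpen W ∧ x ∈ W ∧ IsConnected W ∧
    ∃ 𝒯 : Set (Set X), 𝒯.Finite ∧ (∀ T ∈ 𝒯, IsPreconnected T) ∧ W \ {x} = ⋃₀ 𝒯

namespace StarNhdsBasis

variable {X : Type*} [TopologicalSpace X]

theorem locallyConnectedSpace (h : StarNhdsBasis X) : LocallyConnectedSpace X :=
  locallyConnectedSpace_iff_subsets_isOpen_isConnected.mpr fun x S hS => by
    obtain ⟨W, hWS, hWo, hxW, hWc, -⟩ := h x S hS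
    exact ⟨W, hWS, hWo, hxW, hWc⟩

theorem finite_divisor [T1Space X] (h : StarNhdsBasis X) {x : X} (B : BranchNbhd x) :
    Finite (Divisor B) := by
  have := h.locallyConnectedSpace
  obtain ⟨W, hWB, hWo, hxW, -, 𝒯, h𝒯, hpre, hW𝒯⟩ := h x _ (B.isOpen'.mem_nhds B.mem')
  have := finite_connectedComponents_of_eq_sUnion h𝒯 hpre hW𝒯
  exact Finite.of_surjective _ (inclComponentsMap_sdiff_singleton_surjective (hWo.mem_nhds hxW)
    B.isOpen' B.conn'.isPreconnected B.mem' (sdiff_subset_sdiff_left hWB))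

theorem of_homeomorph {Y : Type*} [TopologicalSpace Y] (h : StarNhdsBasis Y) (φ : X ≃ₜ Y) :
    StarNhdsBasis X := by
  intro x S hS
  obtain ⟨W, hWS, hWo, hxW, hWc, 𝒯, h𝒯, hpre, hW𝒯⟩ :=
    h (φ x) (φ '' S) (φ.isOpenMap.image_mem_nhds hS)
  refine ⟨φ.symm '' W, ?_, φ.symm.isOpenMap W hWo, ⟨φ x, hxW, φ.symm_apply_apply x⟩,
    hWc.image _ φ.symm.continuous.continuousOn, image φ.symm '' 𝒯, h𝒯.image _,
    forall_mem_image.mpr fun T hT => (hpre T hT).image _ φ.symm.continuous.continuousOn, ?_⟩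
  · exact (image_mono hWS).trans (φ.symm_image_image S).subset
  · rw [sUnion_image, ← image_iUnion₂, ← sUnion_eq_biUnion, ← hW𝒯, image_sdiff φ.symm.injective,
      image_singleton, φ.symm_apply_apply]

end StarNhdsBasis

open Metric

theorem unitInterval.ordConnected_ball (s : unitInterval) (ε : ℝ) :
    (ball s ε).OrdConnected := by
  have : (ball (s : ℝ) ε).OrdConnected := by
    rw [Real.ball_eq_Ioo]
    exact ordConnected_Ioo
  exact this.preimage_mono (Subtype.mono_coe _)

theorem unitInterval.eq_zero_or_eq_one_of_notMem_Ioo {s : unitInterval} (hs : s ∉ Ioo 0 1) :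
    s = 0 ∨ s = 1 := by
  rw [mem_Ioo, not_and_or, not_lt, not_lt] at hs
  exact hs.imp (fun h => le_antisymm h s.2.1) fun h => le_antisymm s.2.2 h

namespace GraphRealization

variable {V E : Type} {ends : E → V × V}

def edgeMap (ends : E → V × V) (e : E) (s : unitInterval) : GraphRealization V E ends :=
  Quot.mk _ (.inr (e, s))

theorem isOpen_iff {U : Set (GraphRealization V E ends)} :
    IsOpen U ↔ ∀ e, IsOpen (edgeMap ends e ⁻¹' U) := by
  let _ : TopologicalSpace V := ⊥
  let _ : TopologicalSpace E := ⊥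
  have : DiscreteTopology V := ⟨rfl⟩
  have : DiscreteTopology E := ⟨rfl⟩
  show IsOpen (Quot.mk _ ⁻¹' U) ↔ _
  rw [isOpen_sum_iff]
  simp only [isOpen_discrete, true_and]
  refine ⟨fun h e => h.preimage (Continuous.prodMk_right e), fun h => ?_⟩
  have : (Sum.inr ⁻¹' (Quot.mk _ ⁻¹' U) : Set (E × unitInterval)) =
      ⋃ e, {e} ×ˢ (edgeMap ends e ⁻¹' U) := by
    ext ⟨e, s⟩
    simp only [mem_preimage, mem_iUnion, mem_prod, mem_singleton_iff, exists_eq_left']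
    rfl
  rw [this]
  exact isOpen_iUnion fun e => (isOpen_discrete _).prod (h e)

theorem isClosed_iff {C : Set (GraphRealization V E ends)} :
    IsClosed C ↔ ∀ e, IsClosed (edgeMap ends e ⁻¹' C) := by
  simp only [← isOpen_compl_iff, isOpen_iff, preimage_compl]

theorem continuous_edgeMap (e : E) : Continuous (edgeMap ends e) :=
  continuous_def.mpr fun _ hU => isOpen_iff.mp hU e

theorem edgeMap_eq_edgeMap_iff {e e' : E} {s s' : unitInterval} (hs : s ∈ Ioo 0 1) :
    edgeMap ends e s = edgeMap ends e' s' ↔ e = e' ∧ s = s' := by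
  refine ⟨fun h => ?_, by rintro ⟨rfl, rfl⟩; rfl⟩
  have hrel : ∀ a b, GraphGlueRel V E ends a b → (a = .inr (e, s) ↔ b = .inr (e, s)) := by
    rintro a b (⟨e₀, rfl, rfl⟩ | ⟨e₀, rfl, rfl⟩)
    · simpa using fun _ => hs.1.ne
    · simpa using fun _ => hs.2.ne'
  have := congrArg (Quot.lift (fun w => w = Sum.inr (e, s)) fun a b h => propext (hrel a b h)) h
  obtain ⟨rfl, rfl⟩ : e' = e ∧ s' = s := by simpa [edgeMap] using this
  exact ⟨rfl, rfl⟩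

def fibre (x : GraphRealization V E ends) : Set (E × unitInterval) :=
  {p | edgeMap ends p.1 p.2 = x}

theorem fibre_finite [Finite E] (x : GraphRealization V E ends) : (fibre x).Finite := by
  have hinterior : (fibre x ∩ {p | p.2 ∈ Ioo 0 1}).Subsingleton := by
    rintro ⟨e, s⟩ ⟨hx, hs⟩ ⟨e', s'⟩ ⟨hx', -⟩
    obtain ⟨rfl, rfl⟩ := (edgeMap_eq_edgeMap_iff hs).mp (hx.trans hx'.symm)
    rfl
  refine ((finite_univ.prod (toFinite {0, 1})).union hinterior.finite).subset fun p hp => ?_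
  by_cases hs : p.2 ∈ Ioo 0 1
  · exact Or.inr ⟨hp, hs⟩
  · exact Or.inl ⟨mem_univ _, unitInterval.eq_zero_or_eq_one_of_notMem_Ioo hs⟩

theorem t1Space [Finite E] : T1Space (GraphRealization V E ends) :=
  ⟨fun x => isClosed_iff.mpr fun e =>
    ((fibre_finite x).preimage (Prod.mk_right_injective e).injOn).isClosed⟩

/-- Near a parameter of `x`, no other parameter is glued to anything; this makes `starNbhd x ε` a
union of fibres of the quotient map, hence open. -/
def IsStarRadius (x : GraphRealization V E ends) (ε : ℝ) : Prop :=
  0 < ε ∧ ∀ e s s', edgeMap ends e s' = x → dist s s' < ε → s ≠ s' → s ∈ Ioo 0 1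

theorem eventually_isStarRadius (x : GraphRealization V E ends) :
    ∀ᶠ ε in 𝓝[>] (0 : ℝ), IsStarRadius x ε := by
  suffices ∃ ε₀ > 0, IsStarRadius x ε₀ by
    obtain ⟨ε₀, hε₀, -, hgap⟩ := this
    filter_upwards [Ioc_mem_nhdsGT hε₀] with ε hε
    exact ⟨hε.1, fun e s s' hx hss' => hgap e s s' hx (hss'.trans_le hε.2)⟩
  by_cases h : ∃ e t, t ∈ Ioo 0 1 ∧ edgeMap ends e t = x
  · obtain ⟨e, t, ht, rfl⟩ := h
    refine ⟨min t (1 - t), lt_min ht.1 (sub_pos.2 ht.2), lt_min ht.1 (sub_pos.2 ht.2),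
      fun e' s s' hx hst _ => ?_⟩
    obtain ⟨-, rfl⟩ := (edgeMap_eq_edgeMap_iff ht).mp hx.symm
    rw [Subtype.dist_eq, Real.dist_eq, lt_min_iff, abs_lt, abs_lt] at hst
    constructor <;> [show (0 : ℝ) < s; show (s : ℝ) < 1] <;> linarith
  · push Not at h
    refine ⟨1, one_pos, one_pos, fun e s s' hx hss' hne => ?_⟩
    by_contra hs
    have hs' : s' ∉ Ioo 0 1 := fun hs' => h e s' hs' hx
    rcases unitInterval.eq_zero_or_eq_one_of_notMem_Ioo hs with rfl | rfl <;>
    rcases unitInterval.eq_zero_or_eq_one_of_notMem_Ioo hs' with rfl | rfl <;>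
    simp_all [Subtype.dist_eq]

def starNbhd (x : GraphRealization V E ends) (ε : ℝ) : Set (GraphRealization V E ends) :=
  insert x (⋃ p ∈ fibre x, edgeMap ends p.1 '' ball p.2 ε)

variable {x : GraphRealization V E ends} {ε : ℝ}

theorem preimage_starNbhd (hε : IsStarRadius x ε) (e : E) :
    edgeMap ends e ⁻¹' starNbhd x ε = ⋃ s' ∈ edgeMap ends e ⁻¹' {x}, ball s' ε := by
  ext s
  simp only [mem_preimage, mem_iUnion₂, mem_singleton_iff, exists_prop]
  constructor
  · rintro (hx | hmem)
    · exact ⟨s, hx, mem_ball_self hε.1⟩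
    obtain ⟨p, hp, s₁, hs₁, heq⟩ := mem_iUnion₂.mp hmem
    by_cases h : s₁ = p.2
    · exact ⟨s, heq ▸ h ▸ hp, mem_ball_self hε.1⟩
    obtain ⟨rfl, rfl⟩ := (edgeMap_eq_edgeMap_iff (hε.2 _ _ _ hp hs₁ h)).mp heq
    exact ⟨p.2, hp, hs₁⟩
  · rintro ⟨s', hs', hs⟩
    exact mem_insert_of_mem x (mem_iUnion₂.mpr ⟨(e, s'), hs', s, hs, rfl⟩)

theorem isOpen_starNbhd (hε : IsStarRadius x ε) : IsOpen (starNbhd x ε) :=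
  isOpen_iff.mpr fun e => preimage_starNbhd hε e ▸ isOpen_biUnion fun _ _ => isOpen_ball

theorem isConnected_starNbhd (hε : 0 < ε) : IsConnected (starNbhd x ε) := by
  refine ⟨⟨x, mem_insert x _⟩, isPreconnected_of_forall x ?_⟩
  rintro z (rfl | hz)
  · exact ⟨{z}, singleton_subset_iff.mpr (mem_insert z _), rfl, rfl, isPreconnected_singleton⟩
  obtain ⟨p, hp, s, hs, rfl⟩ := mem_iUnion₂.mp hz
  exact ⟨edgeMap ends p.1 '' ball p.2 ε, fun w hw => mem_insert_of_mem x (mem_biUnion hp hw),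
    ⟨p.2, mem_ball_self hε, hp⟩, mem_image_of_mem _ hs,
    (unitInterval.ordConnected_ball _ _).isPreconnected.image _
      (continuous_edgeMap _).continuousOn⟩

theorem eventually_starNbhd_subset [Finite E] {S : Set (GraphRealization V E ends)}
    (hS : S ∈ 𝓝 x) : ∀ᶠ ε in 𝓝[>] (0 : ℝ), starNbhd x ε ⊆ S := by
  have hball : ∀ p ∈ fibre x, ∀ᶠ ε in 𝓝[>] (0 : ℝ), edgeMap ends p.1 '' ball p.2 ε ⊆ S := by
    rintro ⟨e, s⟩ (rfl : edgeMap ends e s = x)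
    obtain ⟨δ, hδ, hδS⟩ :=
      Metric.mem_nhds_iff.mp ((continuous_edgeMap e).continuousAt.preimage_mem_nhds hS)
    filter_upwards [Ioc_mem_nhdsGT hδ] with ε hε
    exact image_subset_iff.mpr ((ball_subset_ball hε.2).trans hδS)
  filter_upwards [(fibre_finite x).eventually_all.mpr hball] with ε hε
  exact insert_subset (mem_of_mem_nhds hS) (iUnion₂_subset hε)

def spokes (x : GraphRealization V E ends) (ε : ℝ) : Set (Set (GraphRealization V E ends)) :=
  ⋃ p ∈ fibre x, {edgeMap ends p.1 '' (ball p.2 ε ∩ Iio p.2),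
    edgeMap ends p.1 '' (ball p.2 ε ∩ Ioi p.2)}

theorem starNbhd_diff_singleton (hε : IsStarRadius x ε) :
    starNbhd x ε \ {x} = ⋃₀ spokes x ε := by
  ext z
  simp only [spokes, mem_sdiff, mem_singleton_iff, mem_sUnion, mem_iUnion₂, mem_insert_iff,
    exists_prop]
  constructor
  · rintro ⟨rfl | hz, hzx⟩
    · exact absurd rfl hzx
    obtain ⟨p, hp, s, hs, rfl⟩ := mem_iUnion₂.mp hz
    have hsp : s ≠ p.2 := fun h => hzx (h ▸ hp)
    rcases hsp.lt_or_gt with h | h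
    · exact ⟨_, ⟨p, hp, Or.inl rfl⟩, s, ⟨hs, h⟩, rfl⟩
    · exact ⟨_, ⟨p, hp, Or.inr rfl⟩, s, ⟨hs, h⟩, rfl⟩
  · rintro ⟨T, ⟨p, hp, hT⟩, hzT⟩
    obtain ⟨s, hs, hsp, rfl⟩ : ∃ s ∈ ball p.2 ε, s ≠ p.2 ∧ edgeMap ends p.1 s = z := by
      rcases hT with rfl | rfl <;> obtain ⟨s, ⟨hs, hsp⟩, rfl⟩ := hzT
      exacts [⟨s, hs, ne_of_lt hsp, rfl⟩, ⟨s, hs, ne_of_gt hsp, rfl⟩]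
    refine ⟨Or.inr (mem_iUnion₂.mpr ⟨p, hp, s, hs, rfl⟩), fun hx => hsp ?_⟩
    exact ((edgeMap_eq_edgeMap_iff (hε.2 _ _ _ hp hs hsp)).mp (hx.trans hp.symm)).2

theorem spokes_finite [Finite E] : (spokes x ε).Finite :=
  (fibre_finite x).biUnion fun _ _ => toFinite _

theorem isPreconnected_of_mem_spokes {T : Set (GraphRealization V E ends)}
    (hT : T ∈ spokes x ε) : IsPreconnected T := by
  simp only [spokes, mem_iUnion₂, mem_insert_iff, mem_singleton_iff] at hT
  obtain ⟨p, -, rfl | rfl⟩ := hT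
  · exact ((unitInterval.ordConnected_ball _ _).inter ordConnected_Iio).isPreconnected.image _
      (continuous_edgeMap _).continuousOn
  · exact ((unitInterval.ordConnected_ball _ _).inter ordConnected_Ioi).isPreconnected.image _
      (continuous_edgeMap _).continuousOn

theorem starNhdsBasis [Finite E] : StarNhdsBasis (GraphRealization V E ends) := by
  intro x S hS
  obtain ⟨ε, hεS, hε⟩ := ((eventually_starNbhd_subset hS).and (eventually_isStarRadius x)).exists
  exact ⟨starNbhd x ε, hεS, isOpen_starNbhd hε, mem_insert x _, isConnected_starNbhd hε.1,
    spokes x ε, spokes_finite, fun _ => isPreconnected_of_mem_spokes, starNbhd_diff_singleton hε⟩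

end GraphRealization

namespace IsFiniteTopGraph

variable {X : Type*} [TopologicalSpace X]

theorem starNhdsBasis (hX : IsFiniteTopGraph X) : StarNhdsBasis X := by
  obtain ⟨V, E, -, _, ends, ⟨φ⟩⟩ := hX
  exact GraphRealization.starNhdsBasis.of_homeomorph φ

theorem t1Space (hX : IsFiniteTopGraph X) : T1Space X := by
  obtain ⟨V, E, -, _, ends, ⟨φ⟩⟩ := hX
  have := GraphRealization.t1Space (ends := ends)
  exact φ.symm.t1Space

end IsFiniteTopGraph

/-- Let `X` be a 2-connected finite topological graph and `x ≠ y` points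
of `X`.  Then `ι_{x,y} : P_x → π₀(X ∖ {x,y})` is surjective; consequently the number of
components of `X ∖ {x,y}` is at most `deg x`, and `ι_{x,y}` is bijective iff `deg x` equals
the number of components of `X ∖ {x,y}`. -/
theorem iotaMap_surjective
    {X : Type*} [TopologicalSpace X] (hX : IsFiniteTopGraph X) (h2 : TwoConnected X)
    (x y : X) (hxy : x ≠ y) (B : BranchNbhd x) (hyB : y ∉ B.carrier) :
    Function.Surjective (iotaMap B y hyB) ∧
    numComponents (({x, y} : Set X)ᶜ) ≤ degree x ∧
    (Function.Bijective (iotaMap B y hyB) ↔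
      degree x = numComponents (({x, y} : Set X)ᶜ)) := by
  have := hX.t1Space
  have := hX.starNhdsBasis.locallyConnectedSpace
  have := hX.starNhdsBasis.finite_divisor B
  have hconn : IsPreconnected (insert x ({x, y} : Set X)ᶜ) := by
    have : insert x ({x, y} : Set X)ᶜ = {y}ᶜ := by
      ext z
      by_cases hz : z = x <;> simp [hz, hxy]
    rw [this]
    exact (h2.2.2.2 y).isPreconnected
  have hsurj : Function.Surjective (iotaMap B y hyB) :=
    inclComponentsMap_surjective (sdiff_mem_nhdsWithin_compl (B.isOpen'.mem_nhds B.mem') _)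
      (Set.toFinite _).isClosed.isOpen_compl (fun h => h (mem_insert x _)) hconn _
  rw [degree_eq_card_divisor B, numComponents, Nat.bijective_iff_surjective_and_card]
  exact ⟨hsurj, Nat.card_le_card_of_surjective _ hsurj, ⟨And.right, fun h => ⟨hsurj, h⟩⟩⟩

end TreesOfGraphs
end

section
/- Let X₁ and X₂ be 2-connected finite topological graphs, let x₁ ∈ X₁ and x₂ ∈ X₂ be points with deg(x₁) = deg(x₂), let ℓ : P_{x₁} → P_{x₂} be a bijection of blow-up divisors, and let X = X₁ #_ℓ X₂. Fix i ∈ {1, 2} and let x, y ∈ X_i be distinct points with x ≠ x_i and y ≠ x_i, regarded also as points of X via the inclusion X_i ∖ {x_i} ⊆ X. Then x and y are twins in X if and only if x and y are twins in X_i. -/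
open Set Topology

namespace TreesOfGraphs

/-- The blow-up of `X` at `x`: `X` with `x` deleted and one point added for each
local branch at `x` (compactifying that branch). -/
def Blowup {X : Type*} [TopologicalSpace X] {x : X} (B : BranchNbhd x) : Type _ :=
  ↥({x}ᶜ : Set X) ⊕ Divisor B

/-- A point of `X ∖ {x}`, as a point of the blow-up. -/
def Blowup.pt {X : Type*} [TopologicalSpace X] {x : X} (B : BranchNbhd x)
    (y : X) (hy : y ≠ x) : Blowup B :=
  (Sum.inl ⟨y, by simpa using hy⟩ : ↥({x}ᶜ : Set X) ⊕ Divisor B)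

/-- A divisor point of the blow-up. -/
def Blowup.divPt {X : Type*} [TopologicalSpace X] {x : X} (B : BranchNbhd x)
    (c : Divisor B) : Blowup B :=
  (Sum.inr c : ↥({x}ᶜ : Set X) ⊕ Divisor B)

/-- The topology of the blow-up: on `X ∖ {x}` it restricts to the original topology, and a
basic neighbourhood of a divisor point consists of the divisor point together with the part
of its branch lying in a given neighbourhood of `x`. -/
instance {X : Type*} [TopologicalSpace X] {x : X} (B : BranchNbhd x) :
    TopologicalSpace (Blowup B) :=
  TopologicalSpace.generateFrom
    ({S : Set (Blowup B) | ∃ U : Set X, IsOpen U ∧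
        S = Sum.inl '' {y : ↥({x}ᶜ : Set X) | (y : X) ∈ U}} ∪
     {S : Set (Blowup B) | ∃ (c : Divisor B) (V : Set X), IsOpen V ∧ x ∈ V ∧
        S = {Blowup.divPt B c} ∪
          Sum.inl '' {y : ↥({x}ᶜ : Set X) | (y : X) ∈ V ∧
            ∃ hy : (y : X) ∈ B.carrier \ {x},
              ConnectedComponents.mk (⟨(y : X), hy⟩ : ↥(B.carrier \ {x})) = c}})

/-- The gluing relation of the connected sum: each divisor point of the first blow-up is
identified with the corresponding (via `ℓ`) divisor point of the second blow-up. -/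
def ConnSumRel {X₁ X₂ : Type*} [TopologicalSpace X₁] [TopologicalSpace X₂]
    {x₁ : X₁} {x₂ : X₂} (B₁ : BranchNbhd x₁) (B₂ : BranchNbhd x₂)
    (ℓ : Divisor B₁ ≃ Divisor B₂) :
    (Blowup B₁ ⊕ Blowup B₂) → (Blowup B₁ ⊕ Blowup B₂) → Prop := fun a b =>
  ∃ c : Divisor B₁, a = Sum.inl (Blowup.divPt B₁ c) ∧ b = Sum.inr (Blowup.divPt B₂ (ℓ c))

/-- The connected sum of `X₁` and `X₂` at `x₁` and `x₂` along the bijection `ℓ` of blow-up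
divisors: the quotient of the disjoint union of the two blow-ups identifying each `p ∈ P_{x₁}`
with `ℓ p ∈ P_{x₂}`. -/
def ConnSum {X₁ X₂ : Type*} [TopologicalSpace X₁] [TopologicalSpace X₂]
    {x₁ : X₁} {x₂ : X₂} (B₁ : BranchNbhd x₁) (B₂ : BranchNbhd x₂)
    (ℓ : Divisor B₁ ≃ Divisor B₂) : Type _ :=
  Quot (ConnSumRel B₁ B₂ ℓ)

instance {X₁ X₂ : Type*} [TopologicalSpace X₁] [TopologicalSpace X₂]
    {x₁ : X₁} {x₂ : X₂} (B₁ : BranchNbhd x₁) (B₂ : BranchNbhd x₂)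
    (ℓ : Divisor B₁ ≃ Divisor B₂) : TopologicalSpace (ConnSum B₁ B₂ ℓ) :=
  inferInstanceAs (TopologicalSpace (Quot (ConnSumRel B₁ B₂ ℓ)))

/-- The inclusion of `X₁ ∖ {x₁}` into the connected sum. -/
def ConnSum.inclLeft {X₁ X₂ : Type*} [TopologicalSpace X₁] [TopologicalSpace X₂]
    {x₁ : X₁} {x₂ : X₂} (B₁ : BranchNbhd x₁) (B₂ : BranchNbhd x₂)
    (ℓ : Divisor B₁ ≃ Divisor B₂) (y : X₁) (hy : y ≠ x₁) : ConnSum B₁ B₂ ℓ :=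
  Quot.mk _ (Sum.inl (Blowup.pt B₁ y hy))

/-- The inclusion of `X₂ ∖ {x₂}` into the connected sum. -/
def ConnSum.inclRight {X₁ X₂ : Type*} [TopologicalSpace X₁] [TopologicalSpace X₂]
    {x₁ : X₁} {x₂ : X₂} (B₁ : BranchNbhd x₁) (B₂ : BranchNbhd x₂)
    (ℓ : Divisor B₁ ≃ Divisor B₂) (y : X₂) (hy : y ≠ x₂) : ConnSum B₁ B₂ ℓ :=
  Quot.mk _ (Sum.inr (Blowup.pt B₂ y hy))

/-- The blow-down map from a blow-up back to the base space. -/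
def Blowup.projToBase {X : Type*} [TopologicalSpace X] {x : X} (B : BranchNbhd x) :
    Blowup B → X :=
  Sum.elim (fun y => (y : X)) (fun _ => x)

/-- The projection of the connected sum to its first summand: the identity on `X₁ ∖ {x₁}`,
and every other point is sent to `x₁`. -/
def ConnSum.projLeft {X₁ X₂ : Type*} [TopologicalSpace X₁] [TopologicalSpace X₂]
    {x₁ : X₁} {x₂ : X₂} (B₁ : BranchNbhd x₁) (B₂ : BranchNbhd x₂)
    (ℓ : Divisor B₁ ≃ Divisor B₂) : ConnSum B₁ B₂ ℓ → X₁ :=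
  Quot.lift (Sum.elim (Blowup.projToBase B₁) (fun _ => x₁))
    (by rintro a b ⟨c, rfl, rfl⟩; rfl)

section Generic

open Topology Function

variable {α β : Type*} [TopologicalSpace α] [TopologicalSpace β]

/-- A continuous surjection that reflects the connected-component relation induces a
bijection on connected components. -/
lemma card_connectedComponents_eq (m : α → β) (hm : Continuous m) (hsurj : Surjective m)
    (h : ∀ u v : α, m v ∈ connectedComponent (m u) → v ∈ connectedComponent u) :
    Nat.card (ConnectedComponents α) = Nat.card (ConnectedComponents β) := by
  have hc : Continuous (ConnectedComponents.mk ∘ m) :=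
    ConnectedComponents.continuous_coe.comp hm
  refine Nat.card_eq_of_bijective hc.connectedComponentsLift ⟨?_, ?_⟩
  · intro u v huv
    obtain ⟨u, rfl⟩ := ConnectedComponents.surjective_coe u
    obtain ⟨v, rfl⟩ := ConnectedComponents.surjective_coe v
    rw [hc.connectedComponentsLift_apply_coe, hc.connectedComponentsLift_apply_coe] at huv
    have : m v ∈ connectedComponent (m u) := by
      rw [ConnectedComponents.coe_eq_coe.mp huv]; exact mem_connectedComponent
    exact ConnectedComponents.coe_eq_coe.mpr (connectedComponent_eq (h u v this))
  · intro w
    obtain ⟨b, rfl⟩ := ConnectedComponents.surjective_coe w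
    obtain ⟨a, rfl⟩ := hsurj b
    exact ⟨ConnectedComponents.mk a, hc.connectedComponentsLift_apply_coe a⟩

/-- Transfer of preconnectedness to a subtype. -/
lemma isPreconnected_val_preimage {s A : Set α} (hA : IsPreconnected A) (hAs : A ⊆ s) :
    IsPreconnected ((Subtype.val ⁻¹' A : Set s)) := by
  rw [← Topology.IsInducing.subtypeVal.isPreconnected_image]
  rwa [Subtype.image_preimage_coe, Set.inter_eq_self_of_subset_right hAs]

lemma numComponents_image_of_isEmbedding {f : α → β} (hf : Topology.IsEmbedding f)
    (s : Set α) : numComponents s = numComponents (f '' s) := by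
  refine card_connectedComponents_eq (fun u : s => (⟨f u, Set.mem_image_of_mem f u.2⟩ : f '' s))
    ((hf.continuous.comp continuous_subtype_val).subtype_mk _) ?_ ?_
  · rintro ⟨-, z, hz, rfl⟩; exact ⟨⟨z, hz⟩, rfl⟩
  · intro u v hmem
    set m : s → (f '' s : Set β) := fun u : s => ⟨f u, Set.mem_image_of_mem f u.2⟩
    have hA : IsPreconnected (Subtype.val '' connectedComponent (m u)) :=
      Topology.IsInducing.subtypeVal.isPreconnected_image.mpr isPreconnected_connectedComponent
    set A : Set β := Subtype.val '' connectedComponent (m u) with hAdef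
    have hAsub : A ⊆ f '' s := by
      rintro - ⟨w, -, rfl⟩; exact w.2
    have hBeq : f '' (f ⁻¹' A ∩ s) = A := by
      rw [Set.image_inter hf.injective, Set.image_preimage_eq_inter_range]
      rw [Set.inter_assoc, Set.inter_eq_self_of_subset_right (Set.image_subset_range f s)]
      exact Set.inter_eq_self_of_subset_left hAsub
    have hB : IsPreconnected (f ⁻¹' A ∩ s) := by
      rw [← hf.isInducing.isPreconnected_image, hBeq]; exact hA
    have hBs : f ⁻¹' A ∩ s ⊆ s := Set.inter_subset_right
    have hsub : IsPreconnected (Subtype.val ⁻¹' (f ⁻¹' A ∩ s) : Set s) :=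
      isPreconnected_val_preimage hB hBs
    have hu : u ∈ (Subtype.val ⁻¹' (f ⁻¹' A ∩ s) : Set s) :=
      ⟨⟨m u, mem_connectedComponent, rfl⟩, u.2⟩
    have hv : v ∈ (Subtype.val ⁻¹' (f ⁻¹' A ∩ s) : Set s) :=
      ⟨⟨m v, hmem, rfl⟩, v.2⟩
    exact hsub.subset_connectedComponent hu hv

/-- `DegreeAt` transfers along open embeddings. -/
lemma degreeAt_iff_of_isOpenEmbedding {f : α → β} (hf : Topology.IsOpenEmbedding f)
    (x : α) (n : ℕ) : DegreeAt (f x) n ↔ DegreeAt x n := by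
  constructor
  · rintro ⟨U₀, hU₀, hU⟩
    refine ⟨f ⁻¹' U₀, hf.continuous.continuousAt.preimage_mem_nhds hU₀, ?_⟩
    intro U hUsub hUopen hxU hUconn
    have h1 : f '' U ⊆ U₀ := by
      rintro - ⟨z, hz, rfl⟩; exact hUsub hz
    have := hU (f '' U) h1 (hf.isOpenMap U hUopen) (Set.mem_image_of_mem f hxU)
      (hUconn.image f hf.continuous.continuousOn)
    have himg : f '' (U \ {x}) = f '' U \ {f x} := by
      rw [Set.image_diff hf.injective, Set.image_singleton]
    rw [← this, ← himg]
    exact numComponents_image_of_isEmbedding hf.isEmbedding _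
  · rintro ⟨U₀, hU₀, hU⟩
    obtain ⟨O, hOsub, hOopen, hxO⟩ := mem_nhds_iff.mp hU₀
    refine ⟨f '' O, (hf.isOpenMap O hOopen).mem_nhds (Set.mem_image_of_mem f hxO), ?_⟩
    intro U hUsub hUopen hfxU hUconn
    have hUrange : U ⊆ Set.range f := hUsub.trans ((Set.image_subset_range f O))
    have himg : f '' (f ⁻¹' U) = U := Set.image_preimage_eq_of_subset hUrange
    have hU'sub : f ⁻¹' U ⊆ U₀ := by
      intro z hz
      have : f z ∈ f '' O := hUsub hz
      obtain ⟨w, hw, hwz⟩ := this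
      exact hOsub (hf.injective hwz ▸ hw)
    have hU'conn : IsConnected (f ⁻¹' U) := by
      refine ⟨⟨x, hfxU⟩, ?_⟩
      rw [← hf.isInducing.isPreconnected_image, himg]; exact hUconn.2
    have := hU (f ⁻¹' U) hU'sub (hUopen.preimage hf.continuous) hfxU hU'conn
    rw [← this]
    have himg2 : f '' (f ⁻¹' U \ {x}) = U \ {f x} := by
      rw [Set.image_diff hf.injective, Set.image_singleton, himg]
    rw [← himg2]
    exact (numComponents_image_of_isEmbedding hf.isEmbedding _).symm

open Classical in
lemma degree_eq_of_degreeAt_iff {x : α} {y : β} (h : ∀ n, DegreeAt x n ↔ DegreeAt y n) :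
    degree x = degree y := by
  have hEq : DegreeAt x = DegreeAt y := funext fun n => propext (h n)
  show (fun P : ℕ → Prop => if h : ∃ n, P n then h.choose else 0) (DegreeAt x)
    = (fun P : ℕ → Prop => if h : ∃ n, P n then h.choose else 0) (DegreeAt y)
  rw [hEq]

lemma degree_eq_of_isOpenEmbedding {f : α → β} (hf : Topology.IsOpenEmbedding f) (x : α) :
    degree (f x) = degree x :=
  degree_eq_of_degreeAt_iff fun n => degreeAt_iff_of_isOpenEmbedding hf x n

lemma areTwins_iff_of_homeomorph (h : α ≃ₜ β) (u v : α) :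
    AreTwins (h u) (h v) ↔ AreTwins u v := by
  have hdu : degree (h u) = degree u := degree_eq_of_isOpenEmbedding h.isOpenEmbedding u
  have hdv : degree (h v) = degree v := degree_eq_of_isOpenEmbedding h.isOpenEmbedding v
  have hset : ({h u, h v} : Set β)ᶜ = h '' ({u, v} : Set α)ᶜ := by
    rw [Set.image_compl_eq h.bijective, Set.image_insert_eq, Set.image_singleton]
  have hnum : numComponents (({h u, h v} : Set β)ᶜ) = numComponents (({u, v} : Set α)ᶜ) := by
    rw [hset, ← numComponents_image_of_isEmbedding h.isEmbedding]
  unfold AreTwins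
  rw [hdu, hdv, hnum, h.injective.ne_iff]

end Generic

section GraphSpaces

open Topology Function Set

instance : LocallyPathConnectedSpace unitInterval := by
  rw [locPathConnectedSpace_iff_pathComponentIn_mem_nhds]
  intro t u hu htu
  obtain ⟨U, hUopen, hUeq⟩ := isOpen_induced_iff.mp hu
  have hU : U ∈ 𝓝 (t : ℝ) := hUopen.mem_nhds (by rw [← hUeq] at htu; exact htu)
  obtain ⟨a, b, hab, hIoo⟩ := mem_nhds_iff_exists_Ioo_subset.mp hU
  set S : Set unitInterval := Subtype.val ⁻¹' Ioo a b with hSdef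
  have hSopen : IsOpen S := isOpen_Ioo.preimage continuous_subtype_val
  have htS : t ∈ S := hab
  have hSu : S ⊆ u := by
    intro z hz; rw [← hUeq]; exact hIoo hz
  have hSpath : IsPathConnected S := by
    refine ⟨t, htS, ?_⟩
    intro z hz
    have hmem : ∀ s : unitInterval, ((1 - (s:ℝ)) * t + s * z : ℝ) ∈ unitInterval := by
      intro s
      have := (convex_Icc (0:ℝ) 1) t.2 z.2
        (by linarith [s.2.2] : (0:ℝ) ≤ 1 - (s:ℝ)) s.2.1 (by ring)
      simpa [smul_eq_mul] using this
    have htI : (t:ℝ) ∈ Ioo a b := htS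
    have hzI : (z:ℝ) ∈ Ioo a b := hz
    refine ⟨⟨⟨fun s => ⟨(1 - (s:ℝ)) * t + s * z, hmem s⟩, ?_⟩, ?_, ?_⟩, ?_⟩
    · refine Continuous.subtype_mk ?_ _
      fun_prop
    · exact Subtype.ext (by simp)
    · exact Subtype.ext (by simp)
    · intro s
      show ((1 - (s:ℝ)) * t + s * z : ℝ) ∈ Ioo a b
      have := (convex_Ioo a b) htI hzI
        (by linarith [s.2.2] : (0:ℝ) ≤ 1 - (s:ℝ)) s.2.1 (by ring)
      simpa [smul_eq_mul] using this
  exact Filter.mem_of_superset (hSopen.mem_nhds htS)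
    (hSpath.subset_pathComponentIn htS hSu)

lemma locPathConnectedSpace_of_discrete {D : Type*} [TopologicalSpace D] [DiscreteTopology D] :
    LocallyPathConnectedSpace D := by
  rw [locPathConnectedSpace_iff_pathComponentIn_mem_nhds]
  intro x u _ hxu
  rw [nhds_discrete]
  exact mem_pathComponentIn_self hxu

lemma locPathConnectedSpace_prod_discrete {D Y : Type*} [TopologicalSpace D] [DiscreteTopology D]
    [TopologicalSpace Y] [LocallyPathConnectedSpace Y] : LocallyPathConnectedSpace (D × Y) := by
  rw [locPathConnectedSpace_iff_pathComponentIn_mem_nhds]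
  rintro ⟨d, t⟩ u hu htu
  have hslice : IsOpen ((Prod.mk d) ⁻¹' u) := hu.preimage (continuous_const.prodMk continuous_id)
  have ht : t ∈ (Prod.mk d) ⁻¹' u := htu
  have hP : pathComponentIn ((Prod.mk d) ⁻¹' u) t ∈ 𝓝 t :=
    (hslice.pathComponentIn t).mem_nhds (mem_pathComponentIn_self ht)
  have hsub : {d} ×ˢ pathComponentIn ((Prod.mk d) ⁻¹' u) t ⊆ pathComponentIn u (d, t) := by
    rw [Set.singleton_prod]
    refine IsPathConnected.subset_pathComponentIn ?_ ⟨t, mem_pathComponentIn_self ht, rfl⟩ ?_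
    · exact (isPathConnected_pathComponentIn ht).image (continuous_const.prodMk continuous_id)
    · rintro - ⟨z, hz, rfl⟩
      exact (pathComponentIn_subset hz : z ∈ Prod.mk d ⁻¹' u)
  refine Filter.mem_of_superset (prod_mem_nhds ?_ hP) hsub
  rw [nhds_discrete]
  exact rfl

instance instLocPathConnGraphRealization (V E : Type) (ends : E → V × V) :
    LocallyPathConnectedSpace (GraphRealization V E ends) := by
  letI : TopologicalSpace V := ⊥
  letI : TopologicalSpace E := ⊥
  haveI : DiscreteTopology V := discreteTopology_bot V
  haveI : DiscreteTopology E := discreteTopology_bot E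
  haveI : LocallyPathConnectedSpace V := locPathConnectedSpace_of_discrete
  haveI : LocallyPathConnectedSpace (E × unitInterval) := locPathConnectedSpace_prod_discrete
  exact inferInstanceAs (LocallyPathConnectedSpace (Quot (GraphGlueRel V E ends)))

open Classical in
/-- The standard embedding of a graph realization into a product of Euclidean-like spaces,
used only to verify the `T1` separation property. -/
noncomputable def graphEmb (V E : Type) (ends : E → V × V) :
    GraphRealization V E ends → ((V → ℝ) × (E → ℝ) × (E → ℝ)) :=
  Quot.lift
    (Sum.elim
      (fun v => ((fun w => if v = w then (1:ℝ) else 0), 0, 0))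
      (fun q : E × unitInterval =>
          ((fun w => (1 - (q.2:ℝ)) * (if (ends q.1).1 = w then 1 else 0)
              + (q.2:ℝ) * (if (ends q.1).2 = w then 1 else 0)),
           (fun e' => (if q.1 = e' then (1:ℝ) else 0) * ((q.2:ℝ) * (1 - (q.2:ℝ)))),
           (fun e' => (if q.1 = e' then (1:ℝ) else 0) * ((q.2:ℝ)^2 * (1 - (q.2:ℝ)))))))
    (by
      rintro a b (⟨e, rfl, rfl⟩ | ⟨e, rfl, rfl⟩) <;>
        refine Prod.ext (funext fun w => ?_)
          (Prod.ext (funext fun e' => ?_) (funext fun e' => ?_)) <;>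
        simp)

open Classical in
lemma graphEmb_injective (V E : Type) (ends : E → V × V) :
    Function.Injective (graphEmb V E ends) := by
  have hvertex : ∀ (e : E) (t : unitInterval), (t:ℝ) * (1 - (t:ℝ)) = 0 →
      ∃ v : V, Quot.mk (GraphGlueRel V E ends) (Sum.inr (e, t))
        = Quot.mk (GraphGlueRel V E ends) (Sum.inl v) := by
    intro e t ht
    rcases mul_eq_zero.mp ht with h | h
    · have : t = 0 := Subtype.ext h
      subst this
      exact ⟨(ends e).1,
        (@Quot.sound _ (GraphGlueRel V E ends) _ _ (Or.inl ⟨e, rfl, rfl⟩)).symm⟩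
    · have : t = 1 := Subtype.ext
        (by rw [show ((1 : unitInterval) : ℝ) = 1 from rfl]; linarith)
      subst this
      exact ⟨(ends e).2,
        (@Quot.sound _ (GraphGlueRel V E ends) _ _ (Or.inr ⟨e, rfl, rfl⟩)).symm⟩
  have hvv : ∀ v w : V, graphEmb V E ends (Quot.mk _ (Sum.inl v))
      = graphEmb V E ends (Quot.mk _ (Sum.inl w)) → v = w := by
    intro v w h
    have h1 := congrFun (congrArg Prod.fst h) w
    simp only [graphEmb, Sum.elim_inl] at h1
    by_contra hne
    rw [if_neg hne] at h1
    simp at h1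
  have key : ∀ p q : V ⊕ E × unitInterval,
      graphEmb V E ends (Quot.mk _ p) = graphEmb V E ends (Quot.mk _ q) →
      Quot.mk (GraphGlueRel V E ends) p = Quot.mk (GraphGlueRel V E ends) q := by
    have reduce : ∀ p : V ⊕ E × unitInterval,
        (∃ v, Quot.mk (GraphGlueRel V E ends) p = Quot.mk _ (Sum.inl v)) ∨
        (∃ e t, p = Sum.inr (e, t) ∧ (t:ℝ) * (1 - (t:ℝ)) ≠ 0) := by
      rintro (v | ⟨e, t⟩)
      · exact Or.inl ⟨v, rfl⟩
      · by_cases h : (t:ℝ) * (1 - (t:ℝ)) = 0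
        · exact Or.inl (hvertex e t h)
        · exact Or.inr ⟨e, t, rfl, h⟩
    intro p q h
    rcases reduce p with ⟨v, hv⟩ | ⟨e, t, rfl, ht⟩ <;>
      rcases reduce q with ⟨w, hw⟩ | ⟨e', t', rfl, ht'⟩
    · rw [hv, hw] at h ⊢
      exact congrArg _ (congrArg Sum.inl (hvv v w h))
    · exfalso
      rw [hv] at h
      have h2 := congrFun (congrArg (fun z => z.2.1) h) e'
      simp [graphEmb] at h2
      apply ht'
      rcases h2 with h2 | h2
      · rw [h2]; simp
      · rw [h2, mul_zero]
    · exfalso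
      rw [hw] at h
      have h2 := congrFun (congrArg (fun z => z.2.1) h) e
      simp [graphEmb] at h2
      apply ht
      rcases h2 with h2 | h2
      · rw [h2]; simp
      · rw [h2, mul_zero]
    · have h2 := congrFun (congrArg (fun z => z.2.1) h) e'
      simp only [graphEmb, Sum.elim_inr] at h2
      have hee : e = e' := by
        by_contra hne
        rw [if_neg hne, zero_mul] at h2
        have h2' : (t':ℝ) * (1 - (t':ℝ)) = 0 := by simpa using h2.symm
        exact ht' h2'
      subst hee
      have h2' := congrFun (congrArg (fun z => z.2.1) h) e
      have h3 := congrFun (congrArg (fun z => z.2.2) h) e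
      simp [graphEmb] at h2' h3
      have htt : (t:ℝ) = (t':ℝ) := by
        by_contra hne
        set a := (t:ℝ) with ha
        set b := (t':ℝ) with hb
        have e1 : (a - b) * (1 - (a + b)) = 0 := by linear_combination h2'
        have e2 : (a - b) * ((a + b) - (a^2 + a*b + b^2)) = 0 := by linear_combination h3
        have hab : a + b = 1 := by
          rcases mul_eq_zero.mp e1 with h' | h'
          · exact absurd (by linarith : a = b) hne
          · linarith
        have habq : (a + b) - (a^2 + a*b + b^2) = 0 := by
          rcases mul_eq_zero.mp e2 with h' | h'
          · exact absurd (by linarith : a = b) hne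
          · exact h'
        have hab0 : a * b = 0 := by nlinarith [hab, habq]
        rcases mul_eq_zero.mp hab0 with h' | h'
        · exact ht (by rw [h']; ring)
        · exact ht' (by rw [h']; ring)
      rw [show t = t' from Subtype.ext htt]
  intro p q h
  induction p using Quot.ind with | _ p =>
  induction q using Quot.ind with | _ q =>
  exact key p q h

open Classical in
lemma graphEmb_continuous (V E : Type) (ends : E → V × V) :
    Continuous (graphEmb V E ends) := by
  letI : TopologicalSpace V := ⊥
  letI : TopologicalSpace E := ⊥
  haveI : DiscreteTopology V := discreteTopology_bot V
  haveI : DiscreteTopology E := discreteTopology_bot E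
  unfold graphEmb
  refine continuous_quot_lift _ ?_
  have hI : Continuous (fun p : E × unitInterval => ((p.2 : ℝ))) :=
    continuous_subtype_val.comp continuous_snd
  refine Continuous.sumElim ?_ ?_
  · exact continuous_of_discreteTopology
  · refine Continuous.prodMk ?_ (Continuous.prodMk ?_ ?_)
    · refine continuous_pi fun w => ?_
      have h1 : Continuous (fun p : E × unitInterval =>
          (if (ends p.1).1 = w then (1:ℝ) else 0)) :=
        (continuous_of_discreteTopology (α := E)
          (f := fun e => if (ends e).1 = w then (1:ℝ) else 0)).comp continuous_fst
      have h2 : Continuous (fun p : E × unitInterval =>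
          (if (ends p.1).2 = w then (1:ℝ) else 0)) :=
        (continuous_of_discreteTopology (α := E)
          (f := fun e => if (ends e).2 = w then (1:ℝ) else 0)).comp continuous_fst
      exact (((continuous_const.sub hI).mul h1).add (hI.mul h2))
    · refine continuous_pi fun e' => ?_
      have h1 : Continuous (fun p : E × unitInterval => (if p.1 = e' then (1:ℝ) else 0)) :=
        (continuous_of_discreteTopology (α := E)
          (f := fun e => if e = e' then (1:ℝ) else 0)).comp continuous_fst
      exact h1.mul (hI.mul (continuous_const.sub hI))
    · refine continuous_pi fun e' => ?_
      have h1 : Continuous (fun p : E × unitInterval => (if p.1 = e' then (1:ℝ) else 0)) :=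
        (continuous_of_discreteTopology (α := E)
          (f := fun e => if e = e' then (1:ℝ) else 0)).comp continuous_fst
      exact h1.mul ((hI.pow 2).mul (continuous_const.sub hI))

instance instT1GraphRealization (V E : Type) (ends : E → V × V) :
    T1Space (GraphRealization V E ends) :=
  t1Space_of_injective_of_continuous (graphEmb_injective V E ends)
    (graphEmb_continuous V E ends)

/-- The two structural consequences of being a finite topological graph that we use. -/
lemma IsFiniteTopGraph.locPathConn_t1 {X : Type*} [TopologicalSpace X]
    (h : IsFiniteTopGraph X) : LocallyPathConnectedSpace X ∧ T1Space X := by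
  obtain ⟨V, E, _, _, ends, ⟨φ⟩⟩ := h
  exact ⟨φ.isOpenEmbedding.locPathConnectedSpace,
    t1Space_of_injective_of_continuous φ.injective φ.continuous⟩

end GraphSpaces

section BlowupTools

open Topology Function Set

variable {X : Type*} [TopologicalSpace X] {x : X} (B : BranchNbhd x)

/-- The generating family for the blow-up topology. -/
def blowupGen : Set (Set (Blowup B)) :=
  ({S : Set (Blowup B) | ∃ U : Set X, IsOpen U ∧
      S = Sum.inl '' {y : ↥({x}ᶜ : Set X) | (y : X) ∈ U}} ∪
   {S : Set (Blowup B) | ∃ (c : Divisor B) (V : Set X), IsOpen V ∧ x ∈ V ∧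
      S = {Blowup.divPt B c} ∪
        Sum.inl '' {y : ↥({x}ᶜ : Set X) | (y : X) ∈ V ∧
          ∃ hy : (y : X) ∈ B.carrier \ {x},
            ConnectedComponents.mk (⟨(y : X), hy⟩ : ↥(B.carrier \ {x})) = c}})

lemma isOpen_blowupGen {S : Set (Blowup B)} (hS : S ∈ blowupGen B) : IsOpen S :=
  TopologicalSpace.isOpen_generateFrom_of_mem hS

lemma blowup_generateOpen {S : Set (Blowup B)} (hS : IsOpen S) :
    TopologicalSpace.GenerateOpen (blowupGen B) S := hS

/-- Basic neighbourhoods of a divisor point. -/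
lemma blowup_divPt_nbhd {S : Set (Blowup B)} (hS : IsOpen S) {c : Divisor B}
    (hc : Blowup.divPt B c ∈ S) :
    ∃ V : Set X, IsOpen V ∧ x ∈ V ∧
      ({Blowup.divPt B c} ∪
        Sum.inl '' {y : ↥({x}ᶜ : Set X) | (y : X) ∈ V ∧
          ∃ hy : (y : X) ∈ B.carrier \ {x},
            ConnectedComponents.mk (⟨(y : X), hy⟩ : ↥(B.carrier \ {x})) = c}) ⊆ S := by
  have hS' : TopologicalSpace.GenerateOpen (blowupGen B) S := hS
  clear hS
  induction hS' with
  | basic s hs =>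
      rcases hs with ⟨U, hU, rfl⟩ | ⟨c', V, hV, hxV, rfl⟩
      · exfalso; rcases hc with ⟨y, -, hy⟩; exact Sum.inl_ne_inr hy
      · have hcc : c' = c := by
          rcases hc with hc | ⟨y, -, hy⟩
          · have h' : Blowup.divPt B c = Blowup.divPt B c' := hc
            exact (Sum.inr.inj h').symm
          · exact absurd hy (by simp [Blowup.divPt])
        subst hcc
        exact ⟨V, hV, hxV, subset_rfl⟩
  | univ => exact ⟨Set.univ, isOpen_univ, trivial, Set.subset_univ _⟩
  | inter s t hs ht ihs iht =>
      obtain ⟨V₁, hV₁, hxV₁, h₁⟩ := ihs hc.1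
      obtain ⟨V₂, hV₂, hxV₂, h₂⟩ := iht hc.2
      refine ⟨V₁ ∩ V₂, hV₁.inter hV₂, ⟨hxV₁, hxV₂⟩, ?_⟩
      rintro u (hu | ⟨y, ⟨⟨hyV₁, hyV₂⟩, hy2⟩, rfl⟩)
      · exact ⟨h₁ (Or.inl hu), h₂ (Or.inl hu)⟩
      · exact ⟨h₁ (Or.inr ⟨y, ⟨hyV₁, hy2⟩, rfl⟩), h₂ (Or.inr ⟨y, ⟨hyV₂, hy2⟩, rfl⟩)⟩
  | sUnion T hT ih =>
      rcases hc with ⟨s, hsT, hcs⟩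
      obtain ⟨V, hV, hxV, hsub⟩ := ih s hsT hcs
      exact ⟨V, hV, hxV, hsub.trans (Set.subset_sUnion_of_mem hsT)⟩

/-- The inclusion of the punctured space into the blow-up. -/
def blowupInl (B : BranchNbhd x) : ↥({x}ᶜ : Set X) → Blowup B := Sum.inl

/-- The set of points of `X` belonging to the branch `c` at `x`. -/
def branchSet (c : Divisor B) : Set X :=
  {z | ∃ hz : z ∈ B.carrier \ {x},
    ConnectedComponents.mk (⟨z, hz⟩ : ↥(B.carrier \ {x})) = c}

lemma branchSet_subset (c : Divisor B) : branchSet B c ⊆ B.carrier \ {x} :=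
  fun _ hz => hz.1

lemma branchSet_eq (w : ↥(B.carrier \ {x})) :
    branchSet B (ConnectedComponents.mk w) = connectedComponentIn (B.carrier \ {x}) ↑w := by
  rw [connectedComponentIn_eq_image w.2]
  ext z
  constructor
  · rintro ⟨hz, hmk⟩
    exact ⟨⟨z, hz⟩, ConnectedComponents.coe_eq_coe'.mp hmk, rfl⟩
  · rintro ⟨w', hw', rfl⟩
    exact ⟨w'.2, ConnectedComponents.coe_eq_coe'.mpr hw'⟩

lemma branchSet_nonempty (c : Divisor B) : (branchSet B c).Nonempty := by
  obtain ⟨w, rfl⟩ := ConnectedComponents.surjective_coe c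
  exact ⟨↑w, w.2, rfl⟩

lemma isOpen_branchSet [LocallyConnectedSpace X] [T1Space X] (c : Divisor B) :
    IsOpen (branchSet B c) := by
  obtain ⟨w, rfl⟩ := ConnectedComponents.surjective_coe c
  rw [branchSet_eq]
  exact (B.isOpen'.sdiff isClosed_singleton).connectedComponentIn

lemma mem_closure_branchSet [LocallyConnectedSpace X] [T1Space X] (c : Divisor B) :
    x ∈ closure (branchSet B c) := by
  by_contra hcl
  obtain ⟨z₀, hz₀⟩ := branchSet_nonempty B c
  have hrel : closure (branchSet B c) ∩ (B.carrier \ {x}) ⊆ branchSet B c := by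
    obtain ⟨w, rfl⟩ := ConnectedComponents.surjective_coe c
    rintro z ⟨hzc, hzF⟩
    rw [branchSet_eq] at hzc ⊢
    have hDz : IsPreconnected (connectedComponentIn (B.carrier \ {x}) ↑w ∪ {z}) := by
      refine isPreconnected_connectedComponentIn.subset_closure Set.subset_union_left ?_
      rintro u (hu | rfl)
      · exact subset_closure hu
      · exact hzc
    have := hDz.subset_connectedComponentIn
      (Or.inl (mem_connectedComponentIn w.2))
      (Set.union_subset (connectedComponentIn_subset _ _) (by simpa using hzF))
    exact this (Or.inr rfl)
  have hBconn := B.conn'.isPreconnected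
  have hcover : B.carrier ⊆ branchSet B c ∪ (closure (branchSet B c))ᶜ := by
    intro z hz
    by_cases hzc : z ∈ closure (branchSet B c)
    · have hzx : z ≠ x := fun h => hcl (h ▸ hzc)
      exact Or.inl (hrel ⟨hzc, hz, hzx⟩)
    · exact Or.inr hzc
  have hne := hBconn (branchSet B c) (closure (branchSet B c))ᶜ
    (isOpen_branchSet B _) (isClosed_closure.isOpen_compl) hcover
    ⟨z₀, (branchSet_subset B _ hz₀).1, hz₀⟩ ⟨x, B.mem', hcl⟩
  obtain ⟨z, -, hzu, hzv⟩ := hne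
  exact hzv (subset_closure hzu)

lemma blowup_continuous_of_basic {γ : Type*} [TopologicalSpace γ] {f : γ → Blowup B}
    (hbasic : ∀ s ∈ blowupGen B, IsOpen (f ⁻¹' s)) : Continuous f := by
  refine continuous_def.mpr fun s hs => ?_
  have hS' : TopologicalSpace.GenerateOpen (blowupGen B) s := hs
  clear hs
  induction hS' with
  | basic s hs => exact hbasic _ hs
  | univ => rw [Set.preimage_univ]; exact isOpen_univ
  | inter s t _ _ ihs iht => rw [Set.preimage_inter]; exact ihs.inter iht
  | sUnion T _ ih => rw [Set.preimage_sUnion]; exact isOpen_biUnion ih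

lemma continuous_blowup_inl [LocallyConnectedSpace X] [T1Space X] :
    Continuous (blowupInl B) := by
  refine blowup_continuous_of_basic B ?_
  rintro s (⟨U, hU, rfl⟩ | ⟨c, V, hV, hxV, rfl⟩)
  · have : blowupInl B ⁻¹'
        (Sum.inl '' {y : ↥({x}ᶜ : Set X) | (y : X) ∈ U}) =
        Subtype.val ⁻¹' U := by
      ext y
      constructor
      · rintro ⟨y', hy', heq⟩
        obtain rfl : y' = y := Sum.inl.inj heq
        exact hy'
      · intro h
        exact ⟨y, h, rfl⟩
    exact (congrArg (fun s => IsOpen s) this).mpr (hU.preimage continuous_subtype_val)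
  · have : blowupInl B ⁻¹'
        ({Blowup.divPt B c} ∪
          Sum.inl '' {y : ↥({x}ᶜ : Set X) | (y : X) ∈ V ∧
            ∃ hy : (y : X) ∈ B.carrier \ {x},
              ConnectedComponents.mk (⟨(y : X), hy⟩ : ↥(B.carrier \ {x})) = c}) =
        Subtype.val ⁻¹' (V ∩ branchSet B c) := by
      ext y
      constructor
      · intro h
        rcases h with h | ⟨y', hy', heq⟩
        · exact absurd h Sum.inl_ne_inr
        · obtain rfl : y' = y := Sum.inl.inj heq
          exact hy'
      · rintro ⟨h1, h2⟩
        exact Or.inr ⟨y, ⟨h1, h2⟩, rfl⟩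
    exact (congrArg (fun s => IsOpen s) this).mpr
      ((hV.inter (isOpen_branchSet B c)).preimage continuous_subtype_val)

lemma continuous_projToBase [LocallyConnectedSpace X] [T1Space X] :
    Continuous (Blowup.projToBase B) := by
  refine continuous_def.mpr fun U hU => ?_
  by_cases hxU : x ∈ U
  · have heq : Blowup.projToBase B ⁻¹' U =
        (Sum.inl '' {y : ↥({x}ᶜ : Set X) | (y : X) ∈ U}) ∪
        ⋃ c : Divisor B, ({Blowup.divPt B c} ∪
          Sum.inl '' {y : ↥({x}ᶜ : Set X) | (y : X) ∈ U ∧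
            ∃ hy : (y : X) ∈ B.carrier \ {x},
              ConnectedComponents.mk (⟨(y : X), hy⟩ : ↥(B.carrier \ {x})) = c}) := by
      ext u
      rcases u with y | c
      · constructor
        · intro h
          exact Or.inl ⟨y, h, rfl⟩
        · rintro (⟨y', hy', heq⟩ | h)
          · obtain rfl : y' = y := Sum.inl.inj heq
            exact hy'
          · obtain ⟨s, ⟨c, rfl⟩, hs⟩ := h
            rcases hs with hs | ⟨y', hy', heq⟩
            · exact absurd hs (fun h => Sum.inl_ne_inr h)
            · obtain rfl : y' = y := Sum.inl.inj heq
              exact hy'.1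
      · constructor
        · intro _
          exact Or.inr (Set.mem_iUnion.mpr ⟨c, Or.inl rfl⟩)
        · intro _
          exact hxU
    rw [heq]
    exact (isOpen_blowupGen B (Or.inl ⟨U, hU, rfl⟩)).union
      (isOpen_iUnion fun c => isOpen_blowupGen B (Or.inr ⟨c, U, hU, hxU, rfl⟩))
  · have heq : Blowup.projToBase B ⁻¹' U =
        Sum.inl '' {y : ↥({x}ᶜ : Set X) | (y : X) ∈ U} := by
      ext u
      rcases u with y | c
      · constructor
        · intro h; exact ⟨y, h, rfl⟩
        · rintro ⟨y', hy', heq⟩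
          obtain rfl : y' = y := Sum.inl.inj heq
          exact hy'
      · constructor
        · intro h; exact absurd h hxU
        · rintro ⟨y', -, heq⟩; exact (Sum.inl_ne_inr heq).elim
    rw [heq]
    exact isOpen_blowupGen B (Or.inl ⟨U, hU, rfl⟩)

lemma divPt_mem_closure [LocallyConnectedSpace X] [T1Space X] (c : Divisor B) :
    (Blowup.divPt B c : Blowup B) ∈ closure (Set.range (blowupInl B)) := by
  rw [mem_closure_iff]
  intro o ho hco
  obtain ⟨V, hV, hxV, hsub⟩ := blowup_divPt_nbhd B ho hco
  have hne : (V ∩ branchSet B c).Nonempty := by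
    have hx := mem_closure_branchSet B c
    rw [mem_closure_iff] at hx
    exact hx V hV hxV
  obtain ⟨z, hzV, hzb⟩ := hne
  have hzx : z ∈ ({x}ᶜ : Set X) := by
    simpa using (branchSet_subset B c hzb).2
  exact ⟨blowupInl B ⟨z, hzx⟩, hsub (Or.inr ⟨⟨z, hzx⟩, ⟨hzV, hzb⟩, rfl⟩), ⟨⟨z, hzx⟩, rfl⟩⟩

lemma preconnectedSpace_blowup [LocallyConnectedSpace X] [T1Space X]
    (hX : IsConnected ({x}ᶜ : Set X)) : PreconnectedSpace (Blowup B) := by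
  set R := Set.range (blowupInl B) with hR
  have hRconn : IsPreconnected R := by
    haveI : PreconnectedSpace ↥({x}ᶜ : Set X) :=
      isPreconnected_iff_preconnectedSpace.mp hX.isPreconnected
    exact isPreconnected_range (continuous_blowup_inl B)
  have huniv : (Set.univ : Set (Blowup B)) ⊆ closure R := by
    rintro u -
    rcases u with y | c
    · exact subset_closure ⟨y, rfl⟩
    · exact divPt_mem_closure B c
  exact ⟨hRconn.subset_closure (Set.subset_univ R) huniv⟩

end BlowupTools

section ConnSumTools

open Topology Function Set

variable {X₁ X₂ : Type*} [TopologicalSpace X₁] [TopologicalSpace X₂]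
  {x₁ : X₁} {x₂ : X₂} (B₁ : BranchNbhd x₁) (B₂ : BranchNbhd x₂)
  (ℓ : Divisor B₁ ≃ Divisor B₂)

/-- The inclusion of the punctured first summand into the connected sum. -/
def csInl : ↥({x₁}ᶜ : Set X₁) → ConnSum B₁ B₂ ℓ :=
  fun w => Quot.mk _ (Sum.inl (blowupInl B₁ w))

lemma projLeft_csInl (w : ↥({x₁}ᶜ : Set X₁)) :
    ConnSum.projLeft B₁ B₂ ℓ (csInl B₁ B₂ ℓ w) = ↑w := rfl

lemma csInl_injective : Injective (csInl B₁ B₂ ℓ) := fun w w' h =>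
  Subtype.ext (congrArg (ConnSum.projLeft B₁ B₂ ℓ) h)

/-- The explicit description of the equivalence relation generated by `ConnSumRel`. -/
def csRel (a b : Blowup B₁ ⊕ Blowup B₂) : Prop :=
  a = b ∨ ∃ c : Divisor B₁,
    (a = Sum.inl (Blowup.divPt B₁ c) ∧ b = Sum.inr (Blowup.divPt B₂ (ℓ c))) ∨
    (b = Sum.inl (Blowup.divPt B₁ c) ∧ a = Sum.inr (Blowup.divPt B₂ (ℓ c)))

lemma csRel_of_eqvGen {a b : Blowup B₁ ⊕ Blowup B₂}
    (h : Relation.EqvGen (ConnSumRel B₁ B₂ ℓ) a b) : csRel B₁ B₂ ℓ a b := by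
  induction h with
  | rel a b hab =>
      obtain ⟨c, rfl, rfl⟩ := hab
      exact Or.inr ⟨c, Or.inl ⟨rfl, rfl⟩⟩
  | refl a => exact Or.inl rfl
  | symm a b _ ih =>
      rcases ih with rfl | ⟨c, hc | hc⟩
      · exact Or.inl rfl
      · exact Or.inr ⟨c, Or.inr hc⟩
      · exact Or.inr ⟨c, Or.inl hc⟩
  | trans a b c' _ _ ih1 ih2 =>
      rcases ih1 with rfl | ⟨c, hc | hc⟩
      · exact ih2
      · rcases ih2 with hbc | ⟨d, hd | hd⟩
        · exact Or.inr ⟨c, Or.inl ⟨hc.1, hbc.symm.trans hc.2⟩⟩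
        · exact absurd (hc.2.symm.trans hd.1) (by simp [Blowup.divPt])
        · have hcd : c = d := by
            have h' := hc.2.symm.trans hd.2
            exact ℓ.injective (Sum.inr.inj (Sum.inr.inj h'))
          exact Or.inl (hc.1.trans (by rw [hcd]; exact hd.1.symm))
      · rcases ih2 with hbc | ⟨d, hd | hd⟩
        · exact Or.inr ⟨c, Or.inr ⟨hbc.symm.trans hc.1, hc.2⟩⟩
        · have hcd : c = d := by
            have h' := hc.1.symm.trans hd.1
            exact Sum.inr.inj (Sum.inl.inj h')
          exact Or.inl (hc.2.trans (by rw [hcd]; exact hd.2.symm))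
        · exact absurd (hc.1.symm.trans hd.2) (by simp [Blowup.divPt])

lemma connSum_mk_inl_inl {w : ↥({x₁}ᶜ : Set X₁)} {s : Blowup B₁ ⊕ Blowup B₂}
    (h : csInl B₁ B₂ ℓ w = Quot.mk (ConnSumRel B₁ B₂ ℓ) s) :
    s = Sum.inl (blowupInl B₁ w) := by
  have hr := csRel_of_eqvGen B₁ B₂ ℓ (Quot.eqvGen_exact h)
  rcases hr with heq | ⟨c, hc | hc⟩
  · exact heq.symm
  · exact absurd (Sum.inl.inj hc.1) (by simp [blowupInl, Blowup.divPt])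
  · exact absurd hc.2 (by simp)

lemma continuous_csInl [LocallyConnectedSpace X₁] [T1Space X₁] :
    Continuous (csInl B₁ B₂ ℓ) :=
  continuous_quot_mk.comp (continuous_inl.comp (continuous_blowup_inl B₁))

lemma isOpenMap_csInl [LocallyConnectedSpace X₁] [T1Space X₁] :
    IsOpenMap (csInl B₁ B₂ ℓ) := by
  intro O hO
  have hU : IsOpen (Subtype.val '' O : Set X₁) :=
    (isOpen_compl_singleton).isOpenEmbedding_subtypeVal.isOpenMap O hO
  have hOeq : {y : ↥({x₁}ᶜ : Set X₁) | (y : X₁) ∈ Subtype.val '' O} = O := by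
    ext y
    exact Subtype.val_injective.mem_set_image
  have hpre : Quot.mk (ConnSumRel B₁ B₂ ℓ) ⁻¹' (csInl B₁ B₂ ℓ '' O) =
      Sum.inl '' ((Sum.inl '' {y : ↥({x₁}ᶜ : Set X₁) | (y : X₁) ∈ Subtype.val '' O} :
        Set (Blowup B₁))) := by
    rw [hOeq]
    ext s
    constructor
    · rintro ⟨w, hwO, hmk⟩
      have := connSum_mk_inl_inl B₁ B₂ ℓ hmk
      subst this
      exact ⟨Sum.inl w, ⟨w, hwO, rfl⟩, rfl⟩
    · rintro ⟨-, ⟨w, hwO, rfl⟩, rfl⟩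
      exact ⟨w, hwO, rfl⟩
  have : IsOpen (Quot.mk (ConnSumRel B₁ B₂ ℓ) ⁻¹' (csInl B₁ B₂ ℓ '' O)) := by
    rw [hpre]
    exact isOpenMap_inl _ (isOpen_blowupGen B₁ (Or.inl ⟨Subtype.val '' O, hU, rfl⟩))
  exact this

lemma isOpenEmbedding_csInl [LocallyConnectedSpace X₁] [T1Space X₁] :
    Topology.IsOpenEmbedding (csInl B₁ B₂ ℓ) :=
  Topology.IsOpenEmbedding.of_continuous_injective_isOpenMap
    (continuous_csInl B₁ B₂ ℓ) (csInl_injective B₁ B₂ ℓ) (isOpenMap_csInl B₁ B₂ ℓ)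

lemma continuous_projLeft [LocallyConnectedSpace X₁] [T1Space X₁] :
    Continuous (ConnSum.projLeft B₁ B₂ ℓ) := by
  unfold ConnSum.projLeft
  exact continuous_quot_lift _ ((continuous_projToBase B₁).sumElim continuous_const)

lemma eq_csInl_of_ne {u : ConnSum B₁ B₂ ℓ} (hu : ConnSum.projLeft B₁ B₂ ℓ u ≠ x₁) :
    ∃ w, u = csInl B₁ B₂ ℓ w := by
  induction u using Quot.ind with | _ s =>
  rcases s with b | b
  · rcases b with w | c
    · exact ⟨w, rfl⟩
    · exact absurd rfl hu
  · exact absurd rfl hu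

lemma fiber_eq_range : ConnSum.projLeft B₁ B₂ ℓ ⁻¹' {x₁} =
    Set.range (fun b : Blowup B₂ => Quot.mk (ConnSumRel B₁ B₂ ℓ) (Sum.inr b)) := by
  ext u
  constructor
  · intro hu
    induction u using Quot.ind with | _ s =>
    rcases s with b | b
    · rcases b with w | c
      · exact absurd (show (↑w : X₁) = x₁ from hu) w.2
      · exact ⟨Blowup.divPt B₂ (ℓ c), (Quot.sound ⟨c, rfl, rfl⟩).symm⟩
    · exact ⟨b, rfl⟩
  · rintro ⟨b, rfl⟩
    rfl

lemma isPreconnected_fiber [LocallyConnectedSpace X₂] [T1Space X₂]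
    (hX₂ : IsConnected ({x₂}ᶜ : Set X₂)) :
    IsPreconnected (ConnSum.projLeft B₁ B₂ ℓ ⁻¹' {x₁}) := by
  rw [fiber_eq_range]
  haveI := preconnectedSpace_blowup B₂ hX₂
  exact isPreconnected_range (continuous_quot_mk.comp continuous_inr)

lemma divClass_mem_closure [LocallyConnectedSpace X₁] [T1Space X₁]
    (c : Divisor B₁) {A : Set X₁} (hA : A ⊆ branchSet B₁ c) (hclA : x₁ ∈ closure A) :
    Quot.mk (ConnSumRel B₁ B₂ ℓ) (Sum.inl (Blowup.divPt B₁ c)) ∈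
      closure (csInl B₁ B₂ ℓ '' (Subtype.val ⁻¹' A)) := by
  refine mem_closure_iff.mpr ?_
  intro o ho hco
  have hopre : IsOpen (Quot.mk (ConnSumRel B₁ B₂ ℓ) ⁻¹' o) := ho.preimage continuous_quot_mk
  have htr : IsOpen (Sum.inl ⁻¹' (Quot.mk (ConnSumRel B₁ B₂ ℓ) ⁻¹' o) : Set (Blowup B₁)) :=
    hopre.preimage continuous_inl
  have hmem : Blowup.divPt B₁ c ∈
      (Sum.inl ⁻¹' (Quot.mk (ConnSumRel B₁ B₂ ℓ) ⁻¹' o) : Set (Blowup B₁)) := hco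
  obtain ⟨V, hV, hxV, hsub⟩ := blowup_divPt_nbhd B₁ htr hmem
  rw [mem_closure_iff] at hclA
  obtain ⟨z, hzV, hzA⟩ := hclA V hV hxV
  have hzb := hA hzA
  have hzx : z ∈ ({x₁}ᶜ : Set X₁) := by simpa using (branchSet_subset B₁ c hzb).2
  exact ⟨csInl B₁ B₂ ℓ ⟨z, hzx⟩, hsub (Or.inr ⟨⟨z, hzx⟩, ⟨hzV, hzb⟩, rfl⟩),
    ⟨⟨z, hzx⟩, hzA, rfl⟩⟩

end ConnSumTools

section Main

open Topology Function Set

variable {X₁ X₂ : Type*} [TopologicalSpace X₁] [TopologicalSpace X₂]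
  {x₁ : X₁} {x₂ : X₂} (B₁ : BranchNbhd x₁) (B₂ : BranchNbhd x₂)
  (ℓ : Divisor B₁ ≃ Divisor B₂)

lemma numComponents_connSum [LocallyPathConnectedSpace X₁] [T1Space X₁]
    [LocallyConnectedSpace X₂] [T1Space X₂]
    (hX₂conn : IsConnected ({x₂}ᶜ : Set X₂)) (hX₂nt : Nontrivial X₂)
    {x y : X₁} (hx : x ≠ x₁) (hy : y ≠ x₁) (hxy : x ≠ y) :
    numComponents (({csInl B₁ B₂ ℓ ⟨x, hx⟩, csInl B₁ B₂ ℓ ⟨y, hy⟩} :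
      Set (ConnSum B₁ B₂ ℓ))ᶜ) = numComponents (({x, y} : Set X₁)ᶜ) := by
  classical
  set pL := ConnSum.projLeft B₁ B₂ ℓ with hpLdef
  set a := csInl B₁ B₂ ℓ ⟨x, hx⟩ with ha
  set b := csInl B₁ B₂ ℓ ⟨y, hy⟩ with hb
  have hpLa : pL a = x := rfl
  have hpLb : pL b = y := rfl
  set S := ({a, b} : Set (ConnSum B₁ B₂ ℓ))ᶜ with hS
  set T := ({x, y} : Set X₁)ᶜ with hT
  have key : ∀ u : ConnSum B₁ B₂ ℓ, u ∈ S → pL u ∈ T := by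
    intro u huS hmem
    rcases hmem with h | h
    · have hne : pL u ≠ x₁ := by rw [h]; exact hx
      obtain ⟨w, rfl⟩ := eq_csInl_of_ne B₁ B₂ ℓ hne
      exact huS (Or.inl (congrArg (csInl B₁ B₂ ℓ) (Subtype.ext h)))
    · have h' : pL u = y := h
      have hne : pL u ≠ x₁ := by rw [h']; exact hy
      obtain ⟨w, rfl⟩ := eq_csInl_of_ne B₁ B₂ ℓ hne
      exact huS (Or.inr (congrArg (csInl B₁ B₂ ℓ) (Subtype.ext h')))
  set m : ↥S → ↥T := fun u => ⟨pL ↑u, key ↑u u.2⟩ with hm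
  have hmcont : Continuous m :=
    ((continuous_projLeft B₁ B₂ ℓ).comp continuous_subtype_val).subtype_mk _
  obtain ⟨z₂, hz₂⟩ := @exists_ne X₂ hX₂nt x₂
  set z₀ : ConnSum B₁ B₂ ℓ := Quot.mk _ (Sum.inr (blowupInl B₂ ⟨z₂, hz₂⟩)) with hz₀
  have hz₀fib : pL z₀ = x₁ := rfl
  have hz₀S : z₀ ∈ S := by
    rintro (h | h)
    · exact hx ((hz₀fib.symm.trans (congrArg pL h)).trans hpLa).symm
    · exact hy ((hz₀fib.symm.trans (congrArg pL h)).trans hpLb).symm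
  have hmsurj : Surjective m := by
    rintro ⟨t, ht⟩
    by_cases htx : t = x₁
    · refine ⟨⟨z₀, hz₀S⟩, Subtype.ext ?_⟩
      show pL z₀ = t
      rw [hz₀fib, htx]
    · have hwS : csInl B₁ B₂ ℓ ⟨t, htx⟩ ∈ S := by
        rintro (h | h)
        · exact ht (Or.inl (congrArg Subtype.val (csInl_injective B₁ B₂ ℓ h)))
        · exact ht (Or.inr (congrArg Subtype.val (csInl_injective B₁ B₂ ℓ h)))
      exact ⟨⟨_, hwS⟩, Subtype.ext rfl⟩
  refine card_connectedComponents_eq m hmcont hmsurj ?_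
  intro u v hmem
  have hTopen : IsOpen T := by
    have hfin : ({x, y} : Set X₁).Finite := (Set.finite_singleton y).insert x
    exact hfin.isClosed.isOpen_compl
  set C := connectedComponentIn T (pL ↑u) with hC
  have hCopen : IsOpen C := hTopen.connectedComponentIn
  have hCconn : IsConnected C := isConnected_connectedComponentIn_iff.mpr (key ↑u u.2)
  have hCT : C ⊆ T := connectedComponentIn_subset T _
  have hvC : pL ↑v ∈ C := by
    rw [hC, connectedComponentIn_eq_image (key ↑u u.2)]
    exact ⟨m v, hmem, rfl⟩
  have huC : pL ↑u ∈ C := mem_connectedComponentIn (key ↑u u.2)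
  set K := pL ⁻¹' C with hKdef
  have hKS : K ⊆ S := by
    intro u' hu' hcon
    rcases hcon with h | h
    · rw [h] at hu'
      exact (hCT hu') (Or.inl hpLa)
    · rw [h] at hu'
      exact (hCT hu') (Or.inr hpLb)
  have hKconn : IsPreconnected K := by
    by_cases hx₁C : x₁ ∈ C
    · have hZK : pL ⁻¹' {x₁} ⊆ K := by
        intro z hz
        show pL z ∈ C
        rw [show pL z = x₁ from hz]
        exact hx₁C
      have hfib : IsPreconnected (pL ⁻¹' {x₁}) := isPreconnected_fiber B₁ B₂ ℓ hX₂conn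
      refine isPreconnected_of_forall z₀ ?_
      intro u' hu'
      by_cases hpu' : pL u' = x₁
      · exact ⟨pL ⁻¹' {x₁}, hZK, hz₀fib, hpu', hfib⟩
      · obtain ⟨w, rfl⟩ := eq_csInl_of_ne B₁ B₂ ℓ hpu'
        have hzC : (↑w : X₁) ∈ C := hu'
        have hCpath : IsPathConnected C := (hCopen.isConnected_iff_isPathConnected).mp hCconn
        obtain ⟨γ, hγ⟩ := hCpath.joinedIn ↑w hzC x₁ hx₁C
        set Tset := {t : ℝ | t ∈ Icc (0:ℝ) 1 ∧ γ.extend t = x₁} with hTset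
        have hTclosed : IsClosed Tset :=
          (isClosed_Icc).inter (isClosed_singleton.preimage γ.continuous_extend)
        have hTsne : Tset.Nonempty := ⟨1, ⟨zero_le_one, le_refl 1⟩, γ.extend_one⟩
        have hTbdd : BddBelow Tset := ⟨0, fun t ht => ht.1.1⟩
        set t₀ := sInf Tset with ht₀def
        have ht₀ : t₀ ∈ Tset := hTclosed.csInf_mem hTsne hTbdd
        have ht₀pos : 0 < t₀ := by
          rcases lt_or_eq_of_le ht₀.1.1 with h | h
          · exact h
          · exfalso
            have hex : γ.extend 0 = x₁ := by rw [h]; exact ht₀.2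
            rw [Path.extend_zero] at hex
            exact w.2 hex
        have hlt : ∀ s : ℝ, 0 ≤ s → s < t₀ → γ.extend s ≠ x₁ := by
          intro s hs0 hst h
          have hsT : s ∈ Tset := ⟨⟨hs0, le_trans hst.le ht₀.1.2⟩, h⟩
          exact absurd (csInf_le hTbdd hsT) (not_le.mpr hst)
        have hpre : γ.extend ⁻¹' B₁.carrier ∈ 𝓝 t₀ :=
          γ.continuous_extend.continuousAt.preimage_mem_nhds
            (by rw [ht₀.2]; exact B₁.isOpen'.mem_nhds B₁.mem')
        obtain ⟨l, r, hlr, hIoo⟩ := mem_nhds_iff_exists_Ioo_subset.mp hpre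
        set s₀ := max l 0 with hs₀def
        have hs₀t : s₀ < t₀ := max_lt hlr.1 ht₀pos
        set J := γ.extend '' (Ioo s₀ t₀) with hJdef
        have hJsub : J ⊆ B₁.carrier \ {x₁} := by
          rintro - ⟨s, hs, rfl⟩
          have h0s : 0 ≤ s := le_trans (le_max_right l 0) hs.1.le
          refine ⟨hIoo ⟨lt_of_le_of_lt (le_max_left l 0) hs.1, hs.2.trans hlr.2⟩, ?_⟩
          exact hlt s h0s hs.2
        have hJne : J.Nonempty :=
          ⟨γ.extend ((s₀ + t₀) / 2), ⟨(s₀ + t₀) / 2, ⟨by linarith, by linarith⟩, rfl⟩⟩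
        obtain ⟨j₀, hj₀⟩ := hJne
        set c := ConnectedComponents.mk (⟨j₀, hJsub hj₀⟩ : ↥(B₁.carrier \ {x₁})) with hcdef
        have hJc : J ⊆ branchSet B₁ c := by
          intro z hz
          have hJpre : IsPreconnected J :=
            (isPreconnected_Ioo).image _ (γ.continuous_extend.continuousOn)
          have hsubt : IsPreconnected (Subtype.val ⁻¹' J : Set ↥(B₁.carrier \ {x₁})) :=
            isPreconnected_val_preimage hJpre hJsub
          have hj₀m : (⟨j₀, hJsub hj₀⟩ : ↥(B₁.carrier \ {x₁})) ∈ Subtype.val ⁻¹' J := hj₀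
          have hzm : (⟨z, hJsub hz⟩ : ↥(B₁.carrier \ {x₁})) ∈ Subtype.val ⁻¹' J := hz
          exact ⟨hJsub hz, ConnectedComponents.coe_eq_coe'.mpr
            (hsubt.subset_connectedComponent hj₀m hzm)⟩
        have hclJ : x₁ ∈ closure J := by
          have h1 : t₀ ∈ closure (Ioo s₀ t₀) := by
            rw [closure_Ioo (ne_of_lt hs₀t)]
            exact ⟨hs₀t.le, le_refl _⟩
          exact image_closure_subset_closure_image γ.continuous_extend ⟨t₀, h1, ht₀.2⟩
        have hζcl := divClass_mem_closure B₁ B₂ ℓ c hJc hclJ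
        set ζ := Quot.mk (ConnSumRel B₁ B₂ ℓ) (Sum.inl (Blowup.divPt B₁ c)) with hζdef
        set A₁ := csInl B₁ B₂ ℓ '' (Subtype.val ⁻¹' (γ.extend '' (Ico 0 t₀))) with hA₁def
        have hA₁K : A₁ ⊆ K := by
          rintro - ⟨w', hw', rfl⟩
          show pL (csInl B₁ B₂ ℓ w') ∈ C
          obtain ⟨s, hs, hseq⟩ := hw'
          show (↑w' : X₁) ∈ C
          rw [← hseq, γ.extend_apply ⟨hs.1, le_trans hs.2.le ht₀.1.2⟩]
          exact hγ _
        have hA₁conn : IsPreconnected A₁ := by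
          refine IsPreconnected.image ?_ _ ((continuous_csInl B₁ B₂ ℓ).continuousOn)
          refine isPreconnected_val_preimage ?_ ?_
          · exact (isPreconnected_Ico).image _ γ.continuous_extend.continuousOn
          · rintro - ⟨s, hs, rfl⟩
            exact hlt s hs.1 hs.2
        have hu'A₁ : csInl B₁ B₂ ℓ w ∈ A₁ :=
          ⟨w, ⟨0, ⟨le_refl 0, ht₀pos⟩, γ.extend_zero⟩, rfl⟩
        have hζA₁ : ζ ∈ closure A₁ := by
          refine mem_of_mem_of_subset hζcl (closure_mono ?_)
          refine Set.image_mono (Set.preimage_mono (Set.image_mono ?_))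
          intro s hs
          exact ⟨le_trans (le_max_right l 0) hs.1.le, hs.2⟩
        have hζfib : ζ ∈ pL ⁻¹' {x₁} := rfl
        refine ⟨(A₁ ∪ {ζ}) ∪ pL ⁻¹' {x₁}, ?_, Or.inr hz₀fib, Or.inl (Or.inl hu'A₁), ?_⟩
        · refine Set.union_subset (Set.union_subset hA₁K ?_) hZK
          intro q hq
          rw [Set.mem_singleton_iff.mp hq]
          exact hZK hζfib
        · have h1 : IsPreconnected (A₁ ∪ {ζ}) := by
            refine hA₁conn.subset_closure Set.subset_union_left ?_
            refine Set.union_subset subset_closure ?_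
            intro q hq
            rw [Set.mem_singleton_iff.mp hq]
            exact hζA₁
          exact IsPreconnected.union ζ (Or.inr rfl) hζfib h1 hfib
    · have hKeq : K = csInl B₁ B₂ ℓ '' (Subtype.val ⁻¹' C) := by
        ext u'
        constructor
        · intro hu'
          have hne : pL u' ≠ x₁ := fun h => hx₁C (h ▸ hu')
          obtain ⟨w, rfl⟩ := eq_csInl_of_ne B₁ B₂ ℓ hne
          exact ⟨w, hu', rfl⟩
        · rintro ⟨w, hwC, rfl⟩
          exact hwC
      rw [hKeq]
      refine IsPreconnected.image ?_ _ ((continuous_csInl B₁ B₂ ℓ).continuousOn)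
      refine isPreconnected_val_preimage hCconn.isPreconnected ?_
      intro z hz
      exact fun h => hx₁C (h ▸ hz)
  have hsub := isPreconnected_val_preimage hKconn hKS
  exact hsub.subset_connectedComponent (show (u : ConnSum B₁ B₂ ℓ) ∈ K from huC)
    (show (v : ConnSum B₁ B₂ ℓ) ∈ K from hvC)

lemma degree_csInl [LocallyConnectedSpace X₁] [T1Space X₁] (w : ↥({x₁}ᶜ : Set X₁)) :
    degree (csInl B₁ B₂ ℓ w) = degree (w : X₁) := by
  have h1 := degree_eq_of_isOpenEmbedding (isOpenEmbedding_csInl B₁ B₂ ℓ) w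
  have h2 := degree_eq_of_isOpenEmbedding
    (isOpen_compl_singleton : IsOpen ({x₁}ᶜ : Set X₁)).isOpenEmbedding_subtypeVal w
  exact h1.trans h2.symm

lemma areTwins_csInl [LocallyPathConnectedSpace X₁] [T1Space X₁]
    [LocallyConnectedSpace X₂] [T1Space X₂]
    (hX₂conn : IsConnected ({x₂}ᶜ : Set X₂)) (hX₂nt : Nontrivial X₂)
    {x y : X₁} (hx : x ≠ x₁) (hy : y ≠ x₁) (hxy : x ≠ y) :
    AreTwins (csInl B₁ B₂ ℓ ⟨x, hx⟩) (csInl B₁ B₂ ℓ ⟨y, hy⟩) ↔ AreTwins x y := by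
  have hdx : degree (csInl B₁ B₂ ℓ ⟨x, hx⟩) = degree x := degree_csInl B₁ B₂ ℓ ⟨x, hx⟩
  have hdy : degree (csInl B₁ B₂ ℓ ⟨y, hy⟩) = degree y := degree_csInl B₁ B₂ ℓ ⟨y, hy⟩
  have hnum := numComponents_connSum B₁ B₂ ℓ hX₂conn hX₂nt hx hy hxy
  have hab : csInl B₁ B₂ ℓ ⟨x, hx⟩ ≠ csInl B₁ B₂ ℓ ⟨y, hy⟩ := by
    intro h
    exact hxy (congrArg Subtype.val (csInl_injective B₁ B₂ ℓ h))
  unfold AreTwins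
  rw [hdx, hdy, hnum]
  exact ⟨fun h => ⟨hxy, h.2⟩, fun h => ⟨hab, h.2⟩⟩

/-- The connected sum is symmetric. -/
def connSumSwap : ConnSum B₁ B₂ ℓ ≃ₜ ConnSum B₂ B₁ ℓ.symm where
  toFun := Quot.lift (fun s => Quot.mk (ConnSumRel B₂ B₁ ℓ.symm) s.swap)
    (by
      rintro s t ⟨c, rfl, rfl⟩
      show Quot.mk _ (Sum.inr (Blowup.divPt B₁ c)) =
        Quot.mk _ (Sum.inl (Blowup.divPt B₂ (ℓ c)))
      exact (Quot.sound ⟨ℓ c, rfl, by rw [Equiv.symm_apply_apply]⟩).symm)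
  invFun := Quot.lift (fun s => Quot.mk (ConnSumRel B₁ B₂ ℓ) s.swap)
    (by
      rintro s t ⟨c, rfl, rfl⟩
      show Quot.mk _ (Sum.inr (Blowup.divPt B₂ c)) =
        Quot.mk _ (Sum.inl (Blowup.divPt B₁ (ℓ.symm c)))
      exact (Quot.sound ⟨ℓ.symm c, rfl, by rw [Equiv.apply_symm_apply]⟩).symm)
  left_inv := by
    intro u
    induction u using Quot.ind with | _ s =>
    cases s <;> rfl
  right_inv := by
    intro u
    induction u using Quot.ind with | _ s =>
    cases s <;> rfl
  continuous_toFun := continuous_quot_lift _ (continuous_quot_mk.comp continuous_sum_swap)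
  continuous_invFun := continuous_quot_lift _ (continuous_quot_mk.comp continuous_sum_swap)

end Main


/-- In a connected sum `X = X₁ #_ℓ X₂` of 2-connected finite topological
graphs at points `x₁, x₂` of equal degree, two distinct points of `X_i ∖ {x_i}` are twins
in `X` if and only if they are twins in `X_i`. -/
theorem connSum_twins_in_summand
    {X₁ X₂ : Type*} [TopologicalSpace X₁] [TopologicalSpace X₂]
    (h₁g : IsFiniteTopGraph X₁) (h₂g : IsFiniteTopGraph X₂)
    (h₁ : TwoConnected X₁) (h₂ : TwoConnected X₂)
    {x₁ : X₁} {x₂ : X₂} (hdeg : degree x₁ = degree x₂)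
    (B₁ : BranchNbhd x₁) (B₂ : BranchNbhd x₂) (ℓ : Divisor B₁ ≃ Divisor B₂) :
    (∀ (x y : X₁) (hx : x ≠ x₁) (hy : y ≠ x₁), x ≠ y →
      (AreTwins (ConnSum.inclLeft B₁ B₂ ℓ x hx) (ConnSum.inclLeft B₁ B₂ ℓ y hy) ↔
        AreTwins x y)) ∧
    (∀ (x y : X₂) (hx : x ≠ x₂) (hy : y ≠ x₂), x ≠ y →
      (AreTwins (ConnSum.inclRight B₁ B₂ ℓ x hx) (ConnSum.inclRight B₁ B₂ ℓ y hy) ↔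
        AreTwins x y)) := by
  obtain ⟨hlp₁, ht₁⟩ := h₁g.locPathConn_t1
  obtain ⟨hlp₂, ht₂⟩ := h₂g.locPathConn_t1
  haveI := hlp₁
  haveI := ht₁
  haveI := hlp₂
  haveI := ht₂
  constructor
  · intro x y hx hy hxy
    exact areTwins_csInl B₁ B₂ ℓ (h₂.2.2.2 x₂) h₂.2.1 hx hy hxy
  · intro x y hx hy hxy
    have hmain := areTwins_csInl B₂ B₁ ℓ.symm (h₁.2.2.2 x₁) h₁.2.1 hx hy hxy
    have htrans := areTwins_iff_of_homeomorph (connSumSwap B₁ B₂ ℓ)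
      (ConnSum.inclRight B₁ B₂ ℓ x hx) (ConnSum.inclRight B₁ B₂ ℓ y hy)
    rw [← htrans]
    exact hmain

end TreesOfGraphs
end

section
/- Let X be a connected and locally connected T₁ topological space, let x ∈ X, and let C be a connected component of X ∖ {x}. Then the closure of C in X equals C ∪ {x}. -/
open Set Topology

/-! The component `C` of `y` in the open set `{x}ᶜ` is open by local connectedness, and it
absorbs every point of its closure lying in `{x}ᶜ`, because adding a closure point to a
connected set keeps it connected. Hence `frontier C ⊆ {x}`. Since `X` is connected and
`∅ ≠ C ≠ univ`, `C` is not clopen, so its frontier is nonempty and therefore equals `{x}`. -/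

theorem closure_connectedComponentIn_inter_subset {X : Type*} [TopologicalSpace X]
    (F : Set X) (y : X) :
    closure (connectedComponentIn F y) ∩ F ⊆ connectedComponentIn F y := by
  rintro z ⟨hz, hzF⟩
  by_cases hy : y ∈ F
  · exact (isPreconnected_connectedComponentIn.subset_closure (subset_insert z _)
      (insert_subset hz subset_closure)).subset_connectedComponentIn
      (mem_insert_of_mem z (mem_connectedComponentIn hy))
      (insert_subset hzF (connectedComponentIn_subset F y)) (mem_insert z _)
  · simp [connectedComponentIn_eq_empty hy] at hz

theorem IsOpen.frontier_connectedComponentIn_subset_compl {X : Type*} [TopologicalSpace X]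
    [LocallyConnectedSpace X] {F : Set X} (hF : IsOpen F) (y : X) :
    frontier (connectedComponentIn F y) ⊆ Fᶜ := by
  rw [hF.connectedComponentIn.frontier_eq]
  rintro z ⟨hz, hzC⟩ hzF
  exact hzC (closure_connectedComponentIn_inter_subset F y ⟨hz, hzF⟩)

/-- Let `X` be a connected and locally connected T₁ topological space,
let `x ∈ X`, and let `C` be a connected component of `X ∖ {x}` (the component of a point
`y ∈ X ∖ {x}`). Then the closure of `C` in `X` equals `C ∪ {x}`. -/
theorem closure_connectedComponentIn_compl_singleton
    {X : Type*} [TopologicalSpace X] [ConnectedSpace X] [LocallyConnectedSpace X] [T1Space X]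
    (x y : X) (hy : y ∈ ({x}ᶜ : Set X)) :
    closure (connectedComponentIn ({x}ᶜ : Set X) y) =
      connectedComponentIn ({x}ᶜ : Set X) y ∪ {x} := by
  set C := connectedComponentIn ({x}ᶜ : Set X) y
  have hx : x ∉ C := fun hxC => connectedComponentIn_subset _ y hxC rfl
  have hC_ne_univ : C ≠ univ := fun h => hx (h ▸ mem_univ x)
  have hfrontier_nonempty : (frontier C).Nonempty :=
    nonempty_frontier_iff.2 ⟨connectedComponentIn_nonempty_iff.2 hy, hC_ne_univ⟩
  have hfrontier_subset : frontier C ⊆ {x} := by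
    simpa using isOpen_compl_singleton.frontier_connectedComponentIn_subset_compl y
  rw [closure_eq_self_union_frontier, hfrontier_nonempty.subset_singleton_iff.1 hfrontier_subset]
end

section
/- Let X be a finite topological graph and let A ⊆ X be a nonempty connected subspace. Then there exists an increasing sequence C₁ ⊆ C₂ ⊆ ⋯ of nonempty compact connected subsets of X whose union equals A. -/
open Set Topology

namespace TreesOfGraphs

section Aux

attribute [local instance] Classical.propDecidable

variable {V E : Type} {ends : E → V × V}

def vtx (ends : E → V × V) (v : V) : GraphRealization V E ends :=
  Quot.mk _ (Sum.inl v)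

def edgePt (ends : E → V × V) (e : E) (t : unitInterval) : GraphRealization V E ends :=
  Quot.mk _ (Sum.inr (e, t))

noncomputable def rho (ends : E → V × V) (e : E) (t : ℝ) : GraphRealization V E ends :=
  edgePt ends e (Set.projIcc 0 1 zero_le_one t)

lemma edgePt_zero (e : E) : edgePt ends e 0 = vtx ends (ends e).1 := by
  unfold edgePt vtx
  have hrel : GraphGlueRel V E ends (Sum.inl (ends e).1) (Sum.inr (e, 0)) := Or.inl ⟨e, rfl, rfl⟩
  exact (Quot.sound hrel).symm

lemma edgePt_one (e : E) : edgePt ends e 1 = vtx ends (ends e).2 := by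
  unfold edgePt vtx
  have hrel : GraphGlueRel V E ends (Sum.inl (ends e).2) (Sum.inr (e, 1)) := Or.inr ⟨e, rfl, rfl⟩
  exact (Quot.sound hrel).symm

lemma rho_eq_edgePt {t : ℝ} (e : E) (ht : t ∈ Icc (0:ℝ) 1) :
    rho ends e t = edgePt ends e ⟨t, ht⟩ := by
  rw [rho, Set.projIcc_of_mem]

lemma rho_zero (e : E) : rho ends e 0 = vtx ends (ends e).1 := by
  rw [rho_eq_edgePt e ⟨le_refl _, zero_le_one⟩]
  exact edgePt_zero e

lemma rho_one (e : E) : rho ends e 1 = vtx ends (ends e).2 := by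
  rw [rho_eq_edgePt e ⟨zero_le_one, le_refl _⟩]
  convert edgePt_one e
  rfl

/-- separating function for edges -/
noncomputable def theta (e : E) : GraphRealization V E ends → ℝ × ℝ :=
  Quot.lift
    (Sum.elim (fun _ => (0, 0))
      (fun p => if p.1 = e then ((p.2 : ℝ) * (1 - (p.2 : ℝ)), (p.2 : ℝ) * (p.2 : ℝ) * (1 - (p.2 : ℝ))) else (0, 0)))
    (by
      rintro a b (⟨e', ha, hb⟩ | ⟨e', ha, hb⟩) <;> subst ha <;> subst hb <;>
        simp)

/-- separating function for vertices -/
noncomputable def phi (v : V) : GraphRealization V E ends → ℝ :=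
  Quot.lift
    (Sum.elim (fun w => if w = v then (1:ℝ) else 0)
      (fun p => (1 - (p.2 : ℝ)) * (if (ends p.1).1 = v then (1:ℝ) else 0)
        + (p.2 : ℝ) * (if (ends p.1).2 = v then (1:ℝ) else 0)))
    (by
      rintro a b (⟨e', ha, hb⟩ | ⟨e', ha, hb⟩) <;> subst ha <;> subst hb <;>
        simp)

lemma phi_vtx (v w : V) : phi v (vtx ends w) = if w = v then (1:ℝ) else 0 := rfl

lemma theta_vtx (e : E) (v : V) : theta e (vtx ends v) = (0, 0) := rfl

lemma theta_edgePt (e e' : E) (t : unitInterval) :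
    theta e (edgePt ends e' t) =
      if e' = e then ((t : ℝ) * (1 - (t : ℝ)), (t : ℝ) * (t : ℝ) * (1 - (t : ℝ))) else (0, 0) := rfl

lemma phi_edgePt (v : V) (e : E) (t : unitInterval) :
    phi v (edgePt ends e t) = (1 - (t : ℝ)) * (if (ends e).1 = v then (1:ℝ) else 0)
        + (t : ℝ) * (if (ends e).2 = v then (1:ℝ) else 0) := rfl

lemma vtx_injective : Function.Injective (vtx ends) := by
  intro v w h
  have := congrArg (phi v) h
  rw [phi_vtx, phi_vtx, if_pos rfl] at this
  by_contra hne
  rw [if_neg (by exact fun hw => hne hw.symm)] at this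
  norm_num at this

lemma vtx_ne_rho {t : ℝ} (v : V) (e : E) (ht : t ∈ Ioo (0:ℝ) 1) :
    vtx ends v ≠ rho ends e t := by
  intro h
  have := congrArg (theta e) h
  rw [theta_vtx, rho_eq_edgePt e ⟨ht.1.le, ht.2.le⟩, theta_edgePt, if_pos rfl] at this
  have h1 : (0:ℝ) = t * (1 - t) := congrArg Prod.fst this
  nlinarith [ht.1, ht.2]

lemma param_eq {s t : ℝ} (hs : s ∈ Ioo (0:ℝ) 1) (ht : t ∈ Ioo (0:ℝ) 1)
    (h1 : s * (1 - s) = t * (1 - t)) (h2 : s * s * (1 - s) = t * t * (1 - t)) : s = t := by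
  by_contra hne
  have hf : (s - t) * (1 - s - t) = 0 := by linear_combination h1
  rcases mul_eq_zero.1 hf with h | h
  · exact hne (by linarith)
  · have htt : t = 1 - s := by linarith
    rw [htt] at h2
    have hg : s * (1 - s) * (2 * s - 1) = 0 := by ring_nf; ring_nf at h2; linarith
    rcases mul_eq_zero.1 hg with h' | h'
    · rcases mul_eq_zero.1 h' with h'' | h'' <;> nlinarith [hs.1, hs.2]
    · apply hne; rw [htt]; linarith

lemma rho_inj {s t : ℝ} {e e' : E} (hs : s ∈ Ioo (0:ℝ) 1) (ht : t ∈ Ioo (0:ℝ) 1)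
    (h : rho ends e s = rho ends e' t) : e = e' ∧ s = t := by
  have h' := congrArg (theta e') h
  rw [rho_eq_edgePt e ⟨hs.1.le, hs.2.le⟩, rho_eq_edgePt e' ⟨ht.1.le, ht.2.le⟩,
    theta_edgePt, theta_edgePt, if_pos rfl] at h'
  by_cases hee : e = e'
  · subst hee
    rw [if_pos rfl] at h'
    exact ⟨rfl, param_eq hs ht (congrArg Prod.fst h') (congrArg Prod.snd h')⟩
  · rw [if_neg hee] at h'
    have h1 : (0:ℝ) = t * (1 - t) := congrArg Prod.fst h'
    nlinarith [ht.1, ht.2]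

lemma unit_tri (u : unitInterval) : u = 0 ∨ ((u : ℝ) ∈ Ioo (0:ℝ) 1) ∨ u = 1 := by
  rcases lt_or_eq_of_le u.2.1 with h0 | h0
  · rcases lt_or_eq_of_le u.2.2 with h1 | h1
    · exact Or.inr (Or.inl ⟨h0, h1⟩)
    · exact Or.inr (Or.inr (Subtype.ext h1))
  · exact Or.inl (Subtype.ext h0.symm)

lemma forms (y : GraphRealization V E ends) :
    (∃ v, y = vtx ends v) ∨ ∃ e t, t ∈ Ioo (0:ℝ) 1 ∧ y = rho ends e t := by
  induction y using Quot.ind with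
  | _ x =>
    rcases x with v | ⟨e, u⟩
    · exact Or.inl ⟨v, rfl⟩
    · rcases unit_tri u with h | h | h
      · subst h; exact Or.inl ⟨(ends e).1, (edgePt_zero e : _)⟩
      · refine Or.inr ⟨e, u, h, ?_⟩
        rw [rho_eq_edgePt e ⟨h.1.le, h.2.le⟩]
        show edgePt ends e u = _
        exact congrArg (edgePt ends e) (Subtype.ext rfl)
      · subst h; exact Or.inl ⟨(ends e).2, (edgePt_one e : _)⟩


lemma continuous_edgePt (e : E) : Continuous (edgePt ends e) := by
  letI : TopologicalSpace V := ⊥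
  letI : TopologicalSpace E := ⊥
  exact continuous_quot_mk.comp (continuous_inr.comp (Continuous.prodMk_right e))

lemma continuous_rho (e : E) : Continuous (rho ends e) :=
  (continuous_edgePt e).comp continuous_projIcc

lemma continuous_theta (e : E) : Continuous (theta (ends := ends) e) := by
  letI : TopologicalSpace V := ⊥
  letI : TopologicalSpace E := ⊥
  haveI : DiscreteTopology V := ⟨rfl⟩
  haveI : DiscreteTopology E := ⟨rfl⟩
  apply continuous_quot_lift
  apply Continuous.sumElim
  · exact continuous_of_discreteTopology
  · have hrw : (fun p : E × unitInterval =>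
        if p.1 = e then ((p.2 : ℝ) * (1 - (p.2 : ℝ)), (p.2 : ℝ) * (p.2 : ℝ) * (1 - (p.2 : ℝ)))
        else ((0:ℝ), (0:ℝ))) =
        (fun p : E × unitInterval => (if p.1 = e then (1:ℝ) else 0) •
          ((p.2 : ℝ) * (1 - (p.2 : ℝ)), (p.2 : ℝ) * (p.2 : ℝ) * (1 - (p.2 : ℝ)))) := by
      funext p
      split_ifs <;> simp
    rw [hrw]
    apply Continuous.fun_smul
    · exact (continuous_of_discreteTopology
        (f := fun e' : E => if e' = e then (1:ℝ) else 0)).comp continuous_fst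
    · have : Continuous (fun t : unitInterval =>
          ((t : ℝ) * (1 - (t : ℝ)), (t : ℝ) * (t : ℝ) * (1 - (t : ℝ)))) := by fun_prop
      exact this.comp continuous_snd

lemma continuous_phi (v : V) : Continuous (phi (ends := ends) v) := by
  letI : TopologicalSpace V := ⊥
  letI : TopologicalSpace E := ⊥
  haveI : DiscreteTopology V := ⟨rfl⟩
  haveI : DiscreteTopology E := ⟨rfl⟩
  apply continuous_quot_lift
  apply Continuous.sumElim
  · exact continuous_of_discreteTopology
  · apply Continuous.add
    · apply Continuous.mul
      · exact (continuous_const.sub (continuous_subtype_val.comp continuous_snd))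
      · exact (continuous_of_discreteTopology
          (f := fun e' : E => if (ends e').1 = v then (1:ℝ) else 0)).comp continuous_fst
    · apply Continuous.mul
      · exact continuous_subtype_val.comp continuous_snd
      · exact (continuous_of_discreteTopology
          (f := fun e' : E => if (ends e').2 = v then (1:ℝ) else 0)).comp continuous_fst

lemma theta_rho_self {t : ℝ} (e : E) (ht : t ∈ Icc (0:ℝ) 1) :
    theta e (rho ends e t) = (t * (1 - t), t * t * (1 - t)) := by
  rw [rho_eq_edgePt e ht, theta_edgePt, if_pos rfl]

lemma theta_rho_ne {t : ℝ} {e e' : E} (ht : t ∈ Icc (0:ℝ) 1) (hee : e' ≠ e) :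
    theta e (rho ends e' t) = (0, 0) := by
  rw [rho_eq_edgePt e' ht, theta_edgePt, if_neg hee]

instance : T2Space (GraphRealization V E ends) := by
  apply T2Space.of_injective_continuous
    (f := fun y : GraphRealization V E ends => ((fun v => phi v y), (fun e => theta e y)))
  · intro y y' h
    have hφ : ∀ v, phi v y = phi v y' := fun v => congrFun (congrArg Prod.fst h) v
    have hθ : ∀ e, theta e y = theta e y' := fun e => congrFun (congrArg Prod.snd h) e
    rcases forms y with ⟨v, rfl⟩ | ⟨e, t, ht, rfl⟩ <;>
      rcases forms y' with ⟨v', rfl⟩ | ⟨e', t', ht', rfl⟩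
    · have h1 := hφ v
      rw [phi_vtx, phi_vtx, if_pos rfl] at h1
      by_cases hv : v' = v
      · rw [hv]
      · rw [if_neg hv] at h1; norm_num at h1
    · exfalso
      have h1 := hθ e'
      rw [theta_vtx, theta_rho_self e' ⟨ht'.1.le, ht'.2.le⟩] at h1
      have h2 : (0:ℝ) = t' * (1 - t') := congrArg Prod.fst h1
      nlinarith [ht'.1, ht'.2]
    · exfalso
      have h1 := hθ e
      rw [theta_vtx, theta_rho_self e ⟨ht.1.le, ht.2.le⟩] at h1
      have h2 : t * (1 - t) = 0 := congrArg Prod.fst h1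
      nlinarith [ht.1, ht.2]
    · by_cases hee : e' = e
      · subst hee
        have h1 := hθ e'
        rw [theta_rho_self e' ⟨ht.1.le, ht.2.le⟩, theta_rho_self e' ⟨ht'.1.le, ht'.2.le⟩] at h1
        rw [param_eq ht ht' (congrArg Prod.fst h1) (congrArg Prod.snd h1)]
      · exfalso
        have h1 := hθ e
        rw [theta_rho_self e ⟨ht.1.le, ht.2.le⟩, theta_rho_ne ⟨ht'.1.le, ht'.2.le⟩ hee] at h1
        have h2 : t * (1 - t) = 0 := congrArg Prod.fst h1
        nlinarith [ht.1, ht.2]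
  · apply Continuous.prodMk
    · exact continuous_pi fun v => continuous_phi v
    · exact continuous_pi fun e => continuous_theta e

lemma isOpen_rho_Ioo (e : E) {a b : ℝ} (ha : 0 ≤ a) (hb : b ≤ 1) :
    IsOpen (rho ends e '' Ioo a b) := by
  letI : TopologicalSpace V := ⊥
  letI : TopologicalSpace E := ⊥
  haveI : DiscreteTopology E := ⟨rfl⟩
  have hq : IsQuotientMap (Quot.mk (GraphGlueRel V E ends)) := isQuotientMap_quot_mk
  refine hq.isOpen_preimage.mp ?_
  have hset : Quot.mk (GraphGlueRel V E ends) ⁻¹' (rho ends e '' Ioo a b) =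
      Sum.inr '' {p : E × unitInterval | p.1 = e ∧ (p.2 : ℝ) ∈ Ioo a b} := by
    ext x
    rcases x with v | ⟨e', u⟩
    · simp only [mem_preimage, mem_image]
      constructor
      · rintro ⟨t, htm, hteq⟩
        exact absurd hteq.symm
          (vtx_ne_rho v e ⟨lt_of_le_of_lt ha htm.1, lt_of_lt_of_le htm.2 hb⟩)
      · rintro ⟨p, _, hcon⟩
        exact absurd hcon (by simp)
    · simp only [mem_preimage, mem_image]
      constructor
      · rintro ⟨t, htm, hteq⟩
        have htm' : t ∈ Ioo (0:ℝ) 1 := ⟨lt_of_le_of_lt ha htm.1, lt_of_lt_of_le htm.2 hb⟩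
        rcases unit_tri u with h | h | h
        · exfalso
          have : Quot.mk (GraphGlueRel V E ends) (Sum.inr (e', u)) = vtx ends (ends e').1 := by
            show edgePt ends e' u = _
            rw [h]; exact edgePt_zero e'
          rw [this] at hteq
          exact vtx_ne_rho (ends e').1 e htm' hteq.symm
        · have hu : Quot.mk (GraphGlueRel V E ends) (Sum.inr (e', u)) = rho ends e' u := by
            show edgePt ends e' u = _
            rw [rho_eq_edgePt e' ⟨h.1.le, h.2.le⟩]
          rw [hu] at hteq
          obtain ⟨hee, hts⟩ := rho_inj htm' h hteq
          exact ⟨(e', u), ⟨hee.symm, by rw [← hts]; exact htm⟩, rfl⟩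
        · exfalso
          have : Quot.mk (GraphGlueRel V E ends) (Sum.inr (e', u)) = vtx ends (ends e').2 := by
            show edgePt ends e' u = _
            rw [h]; exact edgePt_one e'
          rw [this] at hteq
          exact vtx_ne_rho (ends e').2 e htm' hteq.symm
      · rintro ⟨p, ⟨hp1, hp2⟩, hx⟩
        have hpe : p = (e', u) := Sum.inr_injective hx
        subst hpe
        refine ⟨(u : ℝ), hp2, ?_⟩
        have hu2 : (u : ℝ) ∈ Icc (0:ℝ) 1 := ⟨u.2.1, u.2.2⟩
        rw [rho_eq_edgePt e hu2]
        show edgePt ends e ⟨(u : ℝ), hu2⟩ = edgePt ends e' u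
        rw [show e' = e from hp1]
  erw [hset]
  apply isOpenMap_inr
  have : {p : E × unitInterval | p.1 = e ∧ (p.2 : ℝ) ∈ Ioo a b} =
      (Prod.fst ⁻¹' {e}) ∩ (Prod.snd ⁻¹' (Subtype.val ⁻¹' Ioo a b)) := rfl
  rw [this]
  exact ((isOpen_discrete {e}).preimage continuous_fst).inter
    ((isOpen_Ioo.preimage continuous_subtype_val).preimage continuous_snd)

end Aux

section Helpers

/-- Separation workhorse. -/
lemma sep {Y : Type*} [TopologicalSpace Y] {A U W : Set Y} (hA : IsPreconnected A)
    (hU : IsOpen U) (hW : IsOpen W) (hcov : A ⊆ U ∪ W) (hdisj : A ∩ (U ∩ W) = ∅)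
    (hne : (A ∩ U).Nonempty) : A ⊆ U := by
  intro a ha
  by_contra hcontra
  have h2 : (A ∩ W).Nonempty := ⟨a, ha, (hcov ha).resolve_left hcontra⟩
  have h3 := hA U W hU hW hcov hne h2
  rw [hdisj] at h3
  exact Set.not_nonempty_empty h3

lemma cover_above (S : Set ℝ) (hne : S.Nonempty) (hbd : BddAbove S) :
    ∃ m : ℕ → ℝ, (∀ n, m n ∈ S) ∧ Monotone m ∧ ∀ s ∈ S, ∃ n, s ≤ m n := by
  by_cases h : sSup S ∈ S
  · exact ⟨fun _ => sSup S, fun _ => h, monotone_const, fun s hs => ⟨0, le_csSup hbd hs⟩⟩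
  · obtain ⟨u, hmono, htend, hmem⟩ := exists_seq_tendsto_sSup hne hbd
    refine ⟨u, hmem, hmono, fun s hs => ?_⟩
    have hlt : s < sSup S := lt_of_le_of_ne (le_csSup hbd hs) (fun he => h (he ▸ hs))
    obtain ⟨n, hn⟩ := ((tendsto_order.1 htend).1 s hlt).exists
    exact ⟨n, hn.le⟩

lemma cover_below (S : Set ℝ) (hne : S.Nonempty) (hbd : BddBelow S) :
    ∃ m : ℕ → ℝ, (∀ n, m n ∈ S) ∧ Antitone m ∧ ∀ s ∈ S, ∃ n, m n ≤ s := by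
  by_cases h : sInf S ∈ S
  · exact ⟨fun _ => sInf S, fun _ => h, antitone_const, fun s hs => ⟨0, csInf_le hbd hs⟩⟩
  · obtain ⟨u, hanti, htend, hmem⟩ := exists_seq_tendsto_sInf hne hbd
    refine ⟨u, hmem, hanti, fun s hs => ?_⟩
    have hlt : sInf S < s := lt_of_le_of_ne (csInf_le hbd hs) (fun he => h (he.symm ▸ hs))
    obtain ⟨n, hn⟩ := ((tendsto_order.1 htend).2 s hlt).exists
    exact ⟨n, hn.le⟩

end Helpers

section Main

attribute [local instance] Classical.propDecidable

variable {V E : Type} [Fintype V] [Fintype E] {ends : E → V × V}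

theorem main_realization (A : Set (GraphRealization V E ends)) (hA : IsConnected A) :
    ∃ C : ℕ → Set (GraphRealization V E ends), (∀ n, C n ⊆ C (n + 1)) ∧
      (∀ n, IsCompact (C n) ∧ IsConnected (C n)) ∧ (⋃ n, C n) = A := by
  classical
  obtain ⟨⟨a₀, ha₀⟩, hpc⟩ := hA
  set S : E → Set ℝ := fun e => {t | t ∈ Ioo (0:ℝ) 1 ∧ rho ends e t ∈ A} with hSdef
  by_cases hcase : ∃ e, A ⊆ rho ends e '' Ioo 0 1
  · -- CASE I : A inside a single open edge
    obtain ⟨e, hsub⟩ := hcase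
    obtain ⟨x₀, hx₀m, hx₀⟩ : ∃ x, x ∈ Ioo (0:ℝ) 1 ∧ rho ends e x = a₀ := hsub ha₀
    have hx₀S : x₀ ∈ S e := ⟨hx₀m, hx₀ ▸ ha₀⟩
    have hSord : ∀ u x w, u ∈ S e → w ∈ S e → u ≤ x → x ≤ w → x ∈ S e := by
      intro u x w hu hw hux hxw
      have hxm : x ∈ Ioo (0:ℝ) 1 := ⟨lt_of_lt_of_le hu.1.1 hux, lt_of_le_of_lt hxw hw.1.2⟩
      refine ⟨hxm, ?_⟩
      by_contra hxa
      rcases eq_or_lt_of_le hux with rfl | hux'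
      · exact hxa hu.2
      rcases eq_or_lt_of_le hxw with rfl | hxw'
      · exact hxa hw.2
      have hU : IsOpen (rho ends e '' Ioo 0 x) := isOpen_rho_Ioo e le_rfl hxm.2.le
      have hW : IsOpen (rho ends e '' Ioo x 1) := isOpen_rho_Ioo e hxm.1.le le_rfl
      have hcov : A ⊆ (rho ends e '' Ioo 0 x) ∪ (rho ends e '' Ioo x 1) := by
        intro a ha
        obtain ⟨t, htm, hteq⟩ := hsub ha
        have htx : t ≠ x := by
          rintro rfl
          exact hxa (hteq ▸ ha)
        rcases lt_or_gt_of_ne htx with h | h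
        · exact Or.inl ⟨t, ⟨htm.1, h⟩, hteq⟩
        · exact Or.inr ⟨t, ⟨h, htm.2⟩, hteq⟩
      have hdisj : A ∩ ((rho ends e '' Ioo 0 x) ∩ (rho ends e '' Ioo x 1)) = ∅ := by
        apply eq_empty_iff_forall_notMem.2
        rintro y ⟨_, ⟨t1, ht1, hy1⟩, ⟨t2, ht2, hy2⟩⟩
        have h1 : t1 ∈ Ioo (0:ℝ) 1 := ⟨ht1.1, lt_trans ht1.2 hxm.2⟩
        have h2 : t2 ∈ Ioo (0:ℝ) 1 := ⟨lt_trans hxm.1 ht2.1, ht2.2⟩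
        obtain ⟨-, ht⟩ := rho_inj h1 h2 (hy1.trans hy2.symm)
        rw [ht] at ht1
        exact absurd ht1.2 (not_lt.2 ht2.1.le)
      have hne : (A ∩ (rho ends e '' Ioo 0 x)).Nonempty :=
        ⟨rho ends e u, hu.2, ⟨u, ⟨hu.1.1, hux'⟩, rfl⟩⟩
      have hfin := sep hpc hU hW hcov hdisj hne
      have := hfin hw.2
      obtain ⟨t, htm, hteq⟩ := this
      obtain ⟨-, ht⟩ := rho_inj ⟨htm.1, lt_trans htm.2 hxm.2⟩ hw.1 hteq
      rw [← ht] at hxw'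
      exact absurd htm.2 (not_lt.2 hxw'.le)
    have hbdd : BddAbove (S e) := ⟨1, fun s hs => hs.1.2.le⟩
    have hbddb : BddBelow (S e) := ⟨0, fun s hs => hs.1.1.le⟩
    obtain ⟨m, hmS, hmmono, hmcov⟩ := cover_above (S e) ⟨x₀, hx₀S⟩ hbdd
    obtain ⟨d, hdS, hdanti, hdcov⟩ := cover_below (S e) ⟨x₀, hx₀S⟩ hbddb
    refine ⟨fun n => rho ends e '' Icc (min (d n) x₀) (max (m n) x₀), ?_, ?_, ?_⟩
    · intro n
      apply image_mono
      exact Icc_subset_Icc (min_le_min (hdanti (Nat.le_succ n)) le_rfl)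
        (max_le_max (hmmono (Nat.le_succ n)) le_rfl)
    · intro n
      refine ⟨isCompact_Icc.image (continuous_rho e), ?_, ?_⟩
      · exact ⟨rho ends e x₀, ⟨x₀, ⟨min_le_right _ _, le_max_right _ _⟩, rfl⟩⟩
      · exact isPreconnected_Icc.image _ (continuous_rho e).continuousOn
    · apply subset_antisymm
      · apply iUnion_subset
        intro n
        rintro y ⟨t, htm, rfl⟩
        have hminS : min (d n) x₀ ∈ S e := by
          rcases min_cases (d n) x₀ with ⟨h, -⟩ | ⟨h, -⟩ <;> rw [h]
          exacts [hdS n, hx₀S]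
        have hmaxS : max (m n) x₀ ∈ S e := by
          rcases max_cases (m n) x₀ with ⟨h, -⟩ | ⟨h, -⟩ <;> rw [h]
          exacts [hmS n, hx₀S]
        exact (hSord _ _ _ hminS hmaxS htm.1 htm.2).2
      · intro y hy
        obtain ⟨t, htm, hteq⟩ := hsub hy
        have htS : t ∈ S e := ⟨htm, hteq ▸ hy⟩
        obtain ⟨n1, hn1⟩ := hmcov t htS
        obtain ⟨n2, hn2⟩ := hdcov t htS
        refine mem_iUnion.2 ⟨max n1 n2, ⟨t, ⟨?_, ?_⟩, hteq⟩⟩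
        · exact le_trans (min_le_left _ _) (le_trans (hdanti (le_max_right n1 n2)) hn2)
        · exact le_trans hn1 (le_trans (hmmono (le_max_left n1 n2)) (le_max_left _ _))
  · -- CASE II
    push_neg at hcase
    have hformA : ∀ a ∈ A, (∃ v, a = vtx ends v) ∨ ∃ e t, t ∈ S e ∧ a = rho ends e t := by
      intro a ha
      rcases forms a with ⟨v, rfl⟩ | ⟨e, t, ht, rfl⟩
      · exact Or.inl ⟨v, rfl⟩
      · exact Or.inr ⟨e, t, ⟨ht, ha⟩, rfl⟩
    -- A contains a vertex
    have hvertex : ∃ w, vtx ends w ∈ A := by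
      by_contra hno
      push_neg at hno
      rcases hformA a₀ ha₀ with ⟨v, hv⟩ | ⟨e0, t0, ht0, ha0eq⟩
      · exact hno v (hv ▸ ha₀)
      apply hcase e0
      have hU : IsOpen (rho ends e0 '' Ioo 0 1) := isOpen_rho_Ioo e0 le_rfl le_rfl
      have hW : IsOpen (⋃ e ∈ {e' : E | e' ≠ e0}, rho ends e '' Ioo 0 1) :=
        isOpen_biUnion fun e _ => isOpen_rho_Ioo e le_rfl le_rfl
      apply sep hpc hU hW
      · intro a ha
        rcases hformA a ha with ⟨v, hv⟩ | ⟨e, t, htS, rfl⟩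
        · exact absurd (hv ▸ ha) (hno v)
        · by_cases hee : e = e0
          · subst hee
            exact Or.inl ⟨t, htS.1, rfl⟩
          · exact Or.inr (mem_biUnion hee ⟨t, htS.1, rfl⟩)
      · apply eq_empty_iff_forall_notMem.2
        rintro y ⟨-, ⟨t1, ht1, hy1⟩, hyW⟩
        obtain ⟨e, he, t2, ht2, hy2⟩ := by
          simpa only [mem_iUnion, mem_image, exists_prop] using hyW
        obtain ⟨heq, -⟩ := rho_inj ht1 ht2 (hy1.trans hy2.symm)
        exact he heq.symm
      · exact ⟨a₀, ha₀, by rw [ha0eq]; exact ⟨t0, ht0.1, rfl⟩⟩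
    obtain ⟨w₀, hw₀⟩ := hvertex
    set p : GraphRealization V E ends := vtx ends w₀ with hpdef
    -- gap convexity
    have hconv : ∀ e u x w, u ∈ Ioo (0:ℝ) 1 → w ∈ Ioo (0:ℝ) 1 → u < x → x < w →
        x ∈ S e → u ∈ S e ∨ w ∈ S e := by
      intro e u x w hu hw hux hxw hxS
      by_contra hcon
      push_neg at hcon
      obtain ⟨huS, hwS⟩ := hcon
      apply hcase e
      have hAsub : A ⊆ rho ends e '' Ioo u w := by
        apply sep hpc (isOpen_rho_Ioo e hu.1.le hw.2.le)
          (isOpen_compl_iff.2 (isCompact_Icc.image (continuous_rho e)).isClosed)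
        · intro a ha
          by_cases hmem : a ∈ rho ends e '' Icc u w
          · obtain ⟨t, htm, hteq⟩ := hmem
            have htne1 : t ≠ u := by
              rintro rfl
              exact huS ⟨hu, hteq ▸ ha⟩
            have htne2 : t ≠ w := by
              rintro rfl
              exact hwS ⟨hw, hteq ▸ ha⟩
            exact Or.inl ⟨t, ⟨lt_of_le_of_ne htm.1 (Ne.symm htne1), lt_of_le_of_ne htm.2 htne2⟩,
              hteq⟩
          · exact Or.inr hmem
        · apply eq_empty_iff_forall_notMem.2
          rintro y ⟨-, hyU, hyW⟩
          exact hyW (image_mono Ioo_subset_Icc_self hyU)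
        · exact ⟨rho ends e x, hxS.2, ⟨x, ⟨hux, hxw⟩, rfl⟩⟩
      exact hAsub.trans (image_mono (Ioo_subset_Ioo hu.1.le hw.2.le))
    -- lower and upper pieces on each edge
    set L : E → Set ℝ := fun e => {t | t ∈ S e ∧ ∀ g ∈ Ioo (0:ℝ) 1, g ∉ S e → t < g} with hLdef
    set R : E → Set ℝ := fun e => {t | t ∈ S e ∧ ∀ g ∈ Ioo (0:ℝ) 1, g ∉ S e → g < t} with hRdef
    have hLR : ∀ e, ∀ t ∈ S e, t ∈ L e ∨ t ∈ R e := by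
      intro e t htS
      by_cases hl : ∀ g ∈ Ioo (0:ℝ) 1, g ∉ S e → t < g
      · exact Or.inl ⟨htS, hl⟩
      · push_neg at hl
        obtain ⟨g₀, hg₀m, hg₀S, hg₀le⟩ := hl
        have hg₀lt : g₀ < t := lt_of_le_of_ne hg₀le (fun h => hg₀S (h ▸ htS))
        refine Or.inr ⟨htS, fun g hgm hgS => ?_⟩
        by_contra hgle
        have htg : t < g := lt_of_le_of_ne (not_lt.mp hgle) (fun h => hgS (h ▸ htS))
        rcases hconv e g₀ t g hg₀m hgm hg₀lt htg htS with h | h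
        · exact hg₀S h
        · exact hgS h
    have hLdown : ∀ e, ∀ t ∈ L e, ∀ s ∈ Ioo (0:ℝ) 1, s ≤ t → s ∈ L e := by
      intro e t htL s hsm hst
      have hsS : s ∈ S e := by
        by_contra hsS
        exact absurd (htL.2 s hsm hsS) (not_lt.2 hst)
      exact ⟨hsS, fun g hgm hgS => lt_of_le_of_lt hst (htL.2 g hgm hgS)⟩
    have hRup : ∀ e, ∀ t ∈ R e, ∀ s ∈ Ioo (0:ℝ) 1, t ≤ s → s ∈ R e := by
      intro e t htR s hsm hts
      have hsS : s ∈ S e := by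
        by_contra hsS
        exact absurd (htR.2 s hsm hsS) (not_lt.2 hts)
      exact ⟨hsS, fun g hgm hgS => lt_of_lt_of_le (htR.2 g hgm hgS) hts⟩
    -- gap bounds
    have hgab : ∀ e : E, ∃ a b : ℝ, 0 < a ∧ a ≤ 1 ∧ 0 ≤ b ∧ b < 1 ∧
        (∀ t ∈ L e, t < a) ∧ (∀ s ∈ S e, s < a → s ∈ L e) ∧
        (∀ t ∈ R e, b < t) ∧ (∀ s ∈ S e, b < s → s ∈ R e) := by
      intro e
      by_cases hgap : ∃ g ∈ Ioo (0:ℝ) 1, g ∉ S e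
      · obtain ⟨g, hgm, hgS⟩ := hgap
        refine ⟨g, g, hgm.1, hgm.2.le, hgm.1.le, hgm.2, ?_, ?_, ?_, ?_⟩
        · exact fun t htL => htL.2 g hgm hgS
        · intro s hsS hlt
          rcases hLR e s hsS with h | h
          · exact h
          · exact absurd (h.2 g hgm hgS) (not_lt.2 hlt.le)
        · exact fun t htR => htR.2 g hgm hgS
        · intro s hsS hlt
          rcases hLR e s hsS with h | h
          · exact absurd (h.2 g hgm hgS) (not_lt.2 hlt.le)
          · exact h
      · push_neg at hgap
        refine ⟨1, 0, one_pos, le_rfl, le_rfl, zero_lt_one, ?_, ?_, ?_, ?_⟩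
        · exact fun t htL => htL.1.1.2
        · exact fun s hsS _ => ⟨hsS, fun g hgm hgS => absurd (hgap g hgm) hgS⟩
        · exact fun t htR => htR.1.1.1
        · exact fun s hsS _ => ⟨hsS, fun g hgm hgS => absurd (hgap g hgm) hgS⟩
    choose ga gb hga0 hga1 hgb0 hgb1 hgaL hgaL' hgbR hgbR' using hgab
    -- arcs inside pieces
    have harcL : ∀ e, ∀ s t, s ∈ L e → t ∈ L e →
        rho ends e '' Icc (min s t) (max s t) ⊆ A := by
      intro e s t hs ht
      rintro y ⟨x, hxm, rfl⟩
      have hmaxL : max s t ∈ L e := by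
        rcases max_cases s t with ⟨h, -⟩ | ⟨h, -⟩ <;> rw [h] <;> assumption
      have hxL : x ∈ L e := hLdown e (max s t) hmaxL x
        ⟨lt_of_lt_of_le (lt_min hs.1.1.1 ht.1.1.1) hxm.1, lt_of_le_of_lt hxm.2 hmaxL.1.1.2⟩ hxm.2
      exact hxL.1.2
    have harcR : ∀ e, ∀ s t, s ∈ R e → t ∈ R e →
        rho ends e '' Icc (min s t) (max s t) ⊆ A := by
      intro e s t hs ht
      rintro y ⟨x, hxm, rfl⟩
      have hminR : min s t ∈ R e := by
        rcases min_cases s t with ⟨h, -⟩ | ⟨h, -⟩ <;> rw [h] <;> assumption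
      have hxR : x ∈ R e := hRup e (min s t) hminR x
        ⟨lt_of_lt_of_le hminR.1.1.1 hxm.1,
          lt_of_le_of_lt hxm.2 (max_lt hs.1.1.2 ht.1.1.2)⟩ hxm.1
      exact hxR.1.2
    have harcL0 : ∀ e, ∀ s, s ∈ L e → vtx ends (ends e).1 ∈ A →
        rho ends e '' Icc 0 s ⊆ A := by
      rintro e s hsL hv y ⟨x, hxm, rfl⟩
      rcases eq_or_lt_of_le hxm.1 with h0 | h0
      · rw [← h0, rho_zero]
        exact hv
      · have hxL : x ∈ L e := hLdown e s hsL x ⟨h0, lt_of_le_of_lt hxm.2 hsL.1.1.2⟩ hxm.2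
        exact hxL.1.2
    have harcR1 : ∀ e, ∀ s, s ∈ R e → vtx ends (ends e).2 ∈ A →
        rho ends e '' Icc s 1 ⊆ A := by
      rintro e s hsR hv y ⟨x, hxm, rfl⟩
      rcases eq_or_lt_of_le hxm.2 with h1 | h1
      · rw [h1, rho_one]
        exact hv
      · have hxR : x ∈ R e := hRup e s hsR x ⟨lt_of_lt_of_le hsR.1.1.1 hxm.1, h1⟩ hxm.1
        exact hxR.1.2
    -- KEY local lemma
    have KEY : ∀ z ∈ A, ∃ N, IsOpen N ∧ z ∈ N ∧ ∀ c ∈ A ∩ N,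
        ∃ Γ, Γ ⊆ A ∧ IsCompact Γ ∧ IsPreconnected Γ ∧ z ∈ Γ ∧ c ∈ Γ := by
      intro z hz
      rcases hformA z hz with ⟨w, rfl⟩ | ⟨e, t, htS, rfl⟩
      · -- vertex case
        set α : E → ℝ := fun e => if (ends e).1 = w then (if (ends e).2 = w then 1 else ga e)
          else 0 with hαdef
        set β : E → ℝ := fun e => if (ends e).1 = w then (if (ends e).2 = w then 0 else 1)
          else (if (ends e).2 = w then gb e else 1) with hβdef
        have hα0 : ∀ e, 0 ≤ α e := by
          intro e
          simp only [hαdef]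
          split_ifs
          · exact zero_le_one
          · exact (hga0 e).le
          · exact le_rfl
        have hβ1 : ∀ e, β e ≤ 1 := by
          intro e
          simp only [hβdef]
          split_ifs
          · exact zero_le_one
          · exact le_rfl
          · exact (hgb1 e).le
          · exact le_rfl
        set Z : Set (GraphRealization V E ends) :=
          (⋃ e, rho ends e '' Icc (α e) (β e)) ∪ (vtx ends '' {v | v ≠ w}) with hZdef
        have hZclosed : IsClosed Z := by
          apply IsClosed.union
          · exact isClosed_iUnion_of_finite fun e =>
              (isCompact_Icc.image (continuous_rho e)).isClosed
          · exact ((Set.toFinite {v | v ≠ w}).image _).isClosed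
        refine ⟨Zᶜ, hZclosed.isOpen_compl, ?_, ?_⟩
        · -- vtx w ∉ Z
          intro hzZ
          rcases hzZ with hz1 | hz2
          · obtain ⟨e, hze⟩ := mem_iUnion.1 hz1
            obtain ⟨x, hxm, hxeq⟩ := hze
            have hx01 : x ∈ Icc (0:ℝ) 1 := ⟨le_trans (hα0 e) hxm.1, le_trans hxm.2 (hβ1 e)⟩
            rcases eq_or_lt_of_le hx01.1 with h0 | h0
            · have hv1 : (ends e).1 = w := by
                apply vtx_injective
                rw [← rho_zero e, h0]
                exact hxeq
              have hαpos : 0 < α e := by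
                simp only [hαdef, if_pos hv1]
                split_ifs
                · exact one_pos
                · exact hga0 e
              rw [← h0] at hxm
              exact absurd hxm.1 (not_le.2 hαpos)
            rcases eq_or_lt_of_le hx01.2 with h1 | h1
            · have hv2 : (ends e).2 = w := by
                apply vtx_injective
                rw [← rho_one e, ← h1]
                exact hxeq
              have hβlt : β e < 1 := by
                simp only [hβdef, if_pos hv2]
                split_ifs
                · exact zero_lt_one
                · exact hgb1 e
              rw [h1] at hxm
              exact absurd hxm.2 (not_le.2 hβlt)
            · exact vtx_ne_rho w e ⟨h0, h1⟩ hxeq.symm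
          · obtain ⟨v, hv, hveq⟩ := hz2
            exact hv (vtx_injective hveq)
        · rintro c ⟨hcA, hcN⟩
          rcases hformA c hcA with ⟨v, rfl⟩ | ⟨e, s, hsS, rfl⟩
          · have hvw : v = w := by
              by_contra hne
              exact hcN (Or.inr ⟨v, hne, rfl⟩)
            subst hvw
            exact ⟨{vtx ends v}, singleton_subset_iff.2 hz, isCompact_singleton,
              isPreconnected_singleton, rfl, rfl⟩
          · have hsnot : s ∉ Icc (α e) (β e) := fun hmem =>
              hcN (Or.inl (mem_iUnion.2 ⟨e, ⟨s, hmem, rfl⟩⟩))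
            have hΓgen : ∀ (hv1 : (ends e).1 = w), s ∈ L e →
                ∃ Γ, Γ ⊆ A ∧ IsCompact Γ ∧ IsPreconnected Γ ∧
                  vtx ends w ∈ Γ ∧ rho ends e s ∈ Γ := by
              intro hv1 hsL
              refine ⟨rho ends e '' Icc 0 s, harcL0 e s hsL (hv1 ▸ hz), 
                isCompact_Icc.image (continuous_rho e),
                isPreconnected_Icc.image _ (continuous_rho e).continuousOn,
                ⟨0, ⟨le_rfl, hsS.1.1.le⟩, by rw [rho_zero, hv1]⟩,
                ⟨s, ⟨hsS.1.1.le, le_rfl⟩, rfl⟩⟩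
            have hΓgen2 : ∀ (hv2 : (ends e).2 = w), s ∈ R e →
                ∃ Γ, Γ ⊆ A ∧ IsCompact Γ ∧ IsPreconnected Γ ∧
                  vtx ends w ∈ Γ ∧ rho ends e s ∈ Γ := by
              intro hv2 hsR
              refine ⟨rho ends e '' Icc s 1, harcR1 e s hsR (hv2 ▸ hz),
                isCompact_Icc.image (continuous_rho e),
                isPreconnected_Icc.image _ (continuous_rho e).continuousOn,
                ⟨1, ⟨hsS.1.2.le, le_rfl⟩, by rw [rho_one, hv2]⟩,
                ⟨s, ⟨le_rfl, hsS.1.2.le⟩, rfl⟩⟩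
            by_cases hv1 : (ends e).1 = w <;> by_cases hv2 : (ends e).2 = w
            · rcases hLR e s hsS with hsL | hsR
              · exact hΓgen hv1 hsL
              · exact hΓgen2 hv2 hsR
            · have hslt : s < ga e := by
                by_contra hge
                push_neg at hge
                apply hsnot
                constructor
                · simp only [hαdef, if_pos hv1, if_neg hv2]
                  exact hge
                · simp only [hβdef, if_pos hv1, if_neg hv2]
                  exact hsS.1.2.le
              exact hΓgen hv1 (hgaL' e s hsS hslt)
            · have hslt : gb e < s := by
                by_contra hge
                push_neg at hge
                apply hsnot
                constructor
                · simp only [hαdef, if_neg hv1]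
                  exact hsS.1.1.le
                · simp only [hβdef, if_neg hv1, if_pos hv2]
                  exact hge
              exact hΓgen2 hv2 (hgbR' e s hsS hslt)
            · exfalso
              apply hsnot
              constructor
              · simp only [hαdef, if_neg hv1]
                exact hsS.1.1.le
              · simp only [hβdef, if_neg hv1, if_neg hv2]
                exact hsS.1.2.le
      · -- interior case
        rcases hLR e t htS with htL | htR
        · refine ⟨rho ends e '' Ioo 0 (ga e), isOpen_rho_Ioo e le_rfl (hga1 e),
            ⟨t, ⟨htS.1.1, hgaL e t htL⟩, rfl⟩, ?_⟩
          rintro c ⟨hcA, s, hsm, rfl⟩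
          have hsS : s ∈ S e := ⟨⟨hsm.1, lt_of_lt_of_le hsm.2 (hga1 e)⟩, hcA⟩
          have hsL : s ∈ L e := hgaL' e s hsS hsm.2
          exact ⟨rho ends e '' Icc (min s t) (max s t), harcL e s t hsL htL,
            isCompact_Icc.image (continuous_rho e),
            isPreconnected_Icc.image _ (continuous_rho e).continuousOn,
            ⟨t, ⟨min_le_right _ _, le_max_right _ _⟩, rfl⟩,
            ⟨s, ⟨min_le_left _ _, le_max_left _ _⟩, rfl⟩⟩
        · refine ⟨rho ends e '' Ioo (gb e) 1, isOpen_rho_Ioo e (hgb0 e) le_rfl,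
            ⟨t, ⟨hgbR e t htR, htS.1.2⟩, rfl⟩, ?_⟩
          rintro c ⟨hcA, s, hsm, rfl⟩
          have hsS : s ∈ S e := ⟨⟨lt_of_le_of_lt (hgb0 e) hsm.1, hsm.2⟩, hcA⟩
          have hsR : s ∈ R e := hgbR' e s hsS hsm.1
          exact ⟨rho ends e '' Icc (min s t) (max s t), harcR e s t hsR htR,
            isCompact_Icc.image (continuous_rho e),
            isPreconnected_Icc.image _ (continuous_rho e).continuousOn,
            ⟨t, ⟨min_le_right _ _, le_max_right _ _⟩, rfl⟩,
            ⟨s, ⟨min_le_left _ _, le_max_left _ _⟩, rfl⟩⟩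
    -- the set of points compactly connected to p
    set Conn : Set (GraphRealization V E ends) :=
      {x | x ∈ A ∧ ∃ K, K ⊆ A ∧ IsCompact K ∧ IsPreconnected K ∧ p ∈ K ∧ x ∈ K} with hConndef
    choose N hNopen hNmem hNarc using KEY
    have hjoin : ∀ z (hz : z ∈ A), ∀ c ∈ A ∩ N z hz, z ∈ Conn → c ∈ Conn := by
      intro z hz c hc hzC
      obtain ⟨Γ, hΓA, hΓc, hΓp, hzΓ, hcΓ⟩ := hNarc z hz c hc
      obtain ⟨-, K, hKA, hKc, hKp, hpK, hzK⟩ := hzC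
      exact ⟨hc.1, K ∪ Γ, union_subset hKA hΓA, hKc.union hΓc,
        IsPreconnected.union z hzK hzΓ hKp hΓp, Or.inl hpK, Or.inr hcΓ⟩
    have hjoin' : ∀ z (hz : z ∈ A), ∀ c ∈ A ∩ N z hz, c ∈ Conn → z ∈ Conn := by
      intro z hz c hc hcC
      obtain ⟨Γ, hΓA, hΓc, hΓp, hzΓ, hcΓ⟩ := hNarc z hz c hc
      obtain ⟨-, K, hKA, hKc, hKp, hpK, hcK⟩ := hcC
      exact ⟨hz, K ∪ Γ, union_subset hKA hΓA, hKc.union hΓc,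
        IsPreconnected.union c hcK hcΓ hKp hΓp, Or.inl hpK, Or.inr hzΓ⟩
    have hpConn : p ∈ Conn :=
      ⟨hw₀, {p}, singleton_subset_iff.2 hw₀, isCompact_singleton,
        isPreconnected_singleton, rfl, rfl⟩
    have hAConn : ∀ x ∈ A, x ∈ Conn := by
      have hsubU : A ⊆ ⋃ (z : GraphRealization V E ends) (hz : z ∈ A) (_ : z ∈ Conn), N z hz := by
        apply sep hpc
        · exact isOpen_iUnion fun z => isOpen_iUnion fun hz => isOpen_iUnion fun _ => hNopen z hz
        · exact isOpen_iUnion fun z => isOpen_iUnion fun hz =>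
            isOpen_iUnion fun (_ : z ∉ Conn) => hNopen z hz
        · intro a ha
          by_cases haC : a ∈ Conn
          · exact Or.inl (mem_iUnion.2 ⟨a, mem_iUnion.2 ⟨ha, mem_iUnion.2 ⟨haC, hNmem a ha⟩⟩⟩)
          · exact Or.inr (mem_iUnion.2 ⟨a, mem_iUnion.2 ⟨ha, mem_iUnion.2 ⟨haC, hNmem a ha⟩⟩⟩)
        · apply eq_empty_iff_forall_notMem.2
          rintro y ⟨hyA, hyU, hyW⟩
          obtain ⟨z, hyz⟩ := mem_iUnion.1 hyU
          obtain ⟨hz, hyz2⟩ := mem_iUnion.1 hyz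
          obtain ⟨hzC, hyN⟩ := mem_iUnion.1 hyz2
          obtain ⟨z', hyz'⟩ := mem_iUnion.1 hyW
          obtain ⟨hz', hyz2'⟩ := mem_iUnion.1 hyz'
          obtain ⟨hz'C, hyN'⟩ := mem_iUnion.1 hyz2'
          have hyC : y ∈ Conn := hjoin z hz y ⟨hyA, hyN⟩ hzC
          exact hz'C (hjoin' z' hz' y ⟨hyA, hyN'⟩ hyC)
        · exact ⟨p, hw₀, mem_iUnion.2 ⟨p, mem_iUnion.2 ⟨hw₀, mem_iUnion.2
            ⟨hpConn, hNmem p hw₀⟩⟩⟩⟩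
      intro x hx
      have hxU := hsubU hx
      obtain ⟨z, hyz⟩ := mem_iUnion.1 hxU
      obtain ⟨hz, hyz2⟩ := mem_iUnion.1 hyz
      obtain ⟨hzC, hxN⟩ := mem_iUnion.1 hyz2
      exact hjoin z hz x ⟨hx, hxN⟩ hzC
    -- vertex components
    have hKv : ∀ v : V, ∃ K, K ⊆ A ∧ IsCompact K ∧ IsPreconnected K ∧ p ∈ K ∧
        (vtx ends v ∈ A → vtx ends v ∈ K) := by
      intro v
      by_cases h : vtx ends v ∈ A
      · obtain ⟨-, K, h1, h2, h3, h4, h5⟩ := hAConn _ h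
        exact ⟨K, h1, h2, h3, h4, fun _ => h5⟩
      · exact ⟨{p}, singleton_subset_iff.2 hw₀, isCompact_singleton,
          isPreconnected_singleton, rfl, fun hc => absurd hc h⟩
    choose Kv hKvA hKvc hKvpre hKvp hKvmem using hKv
    -- side components
    have hKside : ∀ (e : E) (T : Set ℝ), T ⊆ S e →
        (∀ s t x, s ∈ T → t ∈ T → s ≤ x → x ≤ t → x ∈ T) →
        ∃ KF : ℕ → Set (GraphRealization V E ends),
          (∀ n, KF n ⊆ A ∧ IsCompact (KF n) ∧ IsPreconnected (KF n) ∧ p ∈ KF n) ∧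
          (∀ n, KF n ⊆ KF (n + 1)) ∧ ∀ t ∈ T, ∃ n, rho ends e t ∈ KF n := by
      intro e T hTS horder
      by_cases hne : T.Nonempty
      · obtain ⟨t₀, ht₀⟩ := hne
        obtain ⟨-, K₀, hK₀A, hK₀c, hK₀pre, hpK₀, ht₀K₀⟩ := hAConn (rho ends e t₀) (hTS ht₀).2
        have hbdd : BddAbove T := ⟨1, fun s hs => (hTS hs).1.2.le⟩
        have hbddb : BddBelow T := ⟨0, fun s hs => (hTS hs).1.1.le⟩
        obtain ⟨m, hmT, hmmono, hmcov⟩ := cover_above T ⟨t₀, ht₀⟩ hbdd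
        obtain ⟨d, hdT, hdanti, hdcov⟩ := cover_below T ⟨t₀, ht₀⟩ hbddb
        have hIccT : ∀ n, Icc (min (d n) t₀) (max (m n) t₀) ⊆ T := by
          intro n x hx
          have hminT : min (d n) t₀ ∈ T := by
            rcases min_cases (d n) t₀ with ⟨h, -⟩ | ⟨h, -⟩ <;> rw [h]
            exacts [hdT n, ht₀]
          have hmaxT : max (m n) t₀ ∈ T := by
            rcases max_cases (m n) t₀ with ⟨h, -⟩ | ⟨h, -⟩ <;> rw [h]
            exacts [hmT n, ht₀]
          exact horder _ _ _ hminT hmaxT hx.1 hx.2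
        refine ⟨fun n => K₀ ∪ rho ends e '' Icc (min (d n) t₀) (max (m n) t₀), ?_, ?_, ?_⟩
        · intro n
          refine ⟨?_, hK₀c.union (isCompact_Icc.image (continuous_rho e)), ?_, Or.inl hpK₀⟩
          · apply union_subset hK₀A
            rintro y ⟨x, hx, rfl⟩
            exact (hTS (hIccT n hx)).2
          · exact IsPreconnected.union (rho ends e t₀) ht₀K₀
              ⟨t₀, ⟨min_le_right _ _, le_max_right _ _⟩, rfl⟩ hK₀pre
              (isPreconnected_Icc.image _ (continuous_rho e).continuousOn)
        · intro n
          apply union_subset_union_right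
          apply image_mono
          exact Icc_subset_Icc (min_le_min (hdanti (Nat.le_succ n)) le_rfl)
            (max_le_max (hmmono (Nat.le_succ n)) le_rfl)
        · intro t ht
          obtain ⟨n1, hn1⟩ := hmcov t ht
          obtain ⟨n2, hn2⟩ := hdcov t ht
          refine ⟨max n1 n2, Or.inr ⟨t, ⟨?_, ?_⟩, rfl⟩⟩
          · exact le_trans (min_le_left _ _) (le_trans (hdanti (le_max_right n1 n2)) hn2)
          · exact le_trans hn1 (le_trans (hmmono (le_max_left n1 n2)) (le_max_left _ _))
      · exact ⟨fun _ => {p}, fun n => ⟨singleton_subset_iff.2 hw₀, isCompact_singleton,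
          isPreconnected_singleton, rfl⟩, fun n => subset_rfl,
          fun t ht => absurd ⟨t, ht⟩ hne⟩
    have hKLex : ∀ e : E, ∃ KF : ℕ → Set (GraphRealization V E ends),
        (∀ n, KF n ⊆ A ∧ IsCompact (KF n) ∧ IsPreconnected (KF n) ∧ p ∈ KF n) ∧
        (∀ n, KF n ⊆ KF (n + 1)) ∧ ∀ t ∈ L e, ∃ n, rho ends e t ∈ KF n := by
      intro e
      apply hKside e (L e) (fun t ht => ht.1)
      intro s t x hs ht hsx hxt
      exact hLdown e t ht x ⟨lt_of_lt_of_le hs.1.1.1 hsx, lt_of_le_of_lt hxt ht.1.1.2⟩ hxt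
    have hKRex : ∀ e : E, ∃ KF : ℕ → Set (GraphRealization V E ends),
        (∀ n, KF n ⊆ A ∧ IsCompact (KF n) ∧ IsPreconnected (KF n) ∧ p ∈ KF n) ∧
        (∀ n, KF n ⊆ KF (n + 1)) ∧ ∀ t ∈ R e, ∃ n, rho ends e t ∈ KF n := by
      intro e
      apply hKside e (R e) (fun t ht => ht.1)
      intro s t x hs ht hsx hxt
      exact hRup e s hs x ⟨lt_of_lt_of_le hs.1.1.1 hsx, lt_of_le_of_lt hxt ht.1.1.2⟩ hsx
    choose KL hKL1 hKL2 hKL3 using hKLex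
    choose KR hKR1 hKR2 hKR3 using hKRex
    -- assemble
    refine ⟨fun n => (⋃ v, Kv v) ∪ (⋃ e, KL e n) ∪ (⋃ e, KR e n), ?_, ?_, ?_⟩
    · intro n
      apply union_subset_union
      · apply union_subset_union_right
        exact iUnion_mono fun e => hKL2 e n
      · exact iUnion_mono fun e => hKR2 e n
    · intro n
      refine ⟨?_, ?_, ?_⟩
      · exact ((isCompact_iUnion fun v => hKvc v).union
          (isCompact_iUnion fun e => (hKL1 e n).2.1)).union
          (isCompact_iUnion fun e => (hKR1 e n).2.1)
      · exact ⟨p, Or.inl (Or.inl (mem_iUnion.2 ⟨w₀, hKvp w₀⟩))⟩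
      · have hEq : (⋃ v, Kv v) ∪ (⋃ e, KL e n) ∪ (⋃ e, KR e n) =
            ⋃₀ ((Set.range fun v => Kv v) ∪ (Set.range fun e => KL e n) ∪
              (Set.range fun e => KR e n)) := by
          simp [sUnion_union, sUnion_range]
        show IsPreconnected (((⋃ v, Kv v) ∪ ⋃ e, KL e n) ∪ ⋃ e, KR e n)
        rw [hEq]
        apply isPreconnected_sUnion p
        · rintro s ((⟨v, rfl⟩ | ⟨e, rfl⟩) | ⟨e, rfl⟩)
          exacts [hKvp v, (hKL1 e n).2.2.2, (hKR1 e n).2.2.2]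
        · rintro s ((⟨v, rfl⟩ | ⟨e, rfl⟩) | ⟨e, rfl⟩)
          exacts [hKvpre v, (hKL1 e n).2.2.1, (hKR1 e n).2.2.1]
    · apply subset_antisymm
      · apply iUnion_subset
        intro n
        apply union_subset
        apply union_subset
        · exact iUnion_subset fun v => hKvA v
        · exact iUnion_subset fun e => (hKL1 e n).1
        · exact iUnion_subset fun e => (hKR1 e n).1
      · intro x hx
        rcases hformA x hx with ⟨v, rfl⟩ | ⟨e, t, htS, rfl⟩
        · exact mem_iUnion.2 ⟨0, Or.inl (Or.inl (mem_iUnion.2 ⟨v, hKvmem v hx⟩))⟩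
        · rcases hLR e t htS with htL | htR
          · obtain ⟨n, hn⟩ := hKL3 e t htL
            exact mem_iUnion.2 ⟨n, Or.inl (Or.inr (mem_iUnion.2 ⟨e, hn⟩))⟩
          · obtain ⟨n, hn⟩ := hKR3 e t htR
            exact mem_iUnion.2 ⟨n, Or.inr (mem_iUnion.2 ⟨e, hn⟩)⟩

end Main


/-- Let `X` be a finite topological graph and let `A ⊆ X` be a nonempty
connected subspace.  Then `A` is the union of an increasing sequence of nonempty compact
connected subsets of `X`. -/
theorem connected_subset_eq_iUnion_compact_connected
    {X : Type*} [TopologicalSpace X] (hX : IsFiniteTopGraph X)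
    (A : Set X) (hA : IsConnected A) :
    ∃ C : ℕ → Set X, (∀ n, C n ⊆ C (n + 1)) ∧
      (∀ n, IsCompact (C n) ∧ IsConnected (C n)) ∧ (⋃ n, C n) = A := by
  obtain ⟨V, E, hV, hE, ends, ⟨h⟩⟩ := hX
  haveI := hV
  haveI := hE
  obtain ⟨C', hmono, hprop, hunion⟩ :=
    main_realization ((h : X → GraphRealization V E ends) '' A)
      (hA.image _ h.continuous.continuousOn)
  refine ⟨fun n => h.symm '' C' n, fun n => image_mono (hmono n), fun n =>
    ⟨(hprop n).1.image h.symm.continuous,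
      (hprop n).2.image _ h.symm.continuous.continuousOn⟩, ?_⟩
  rw [← image_iUnion, hunion]
  exact h.symm_image_image A

end TreesOfGraphs
end

section
/- Let (K_α, f_{αα'}) be an inverse system, over a nonempty directed partially ordered set (ι, ≤), of nonempty compact metric spaces whose bonding maps f_{αα'} are continuous surjections, and let Z be its inverse limit with projections f_α : Z → K_α. Let α ∈ ι and let C be a closed subset of K_α. Then the preimage f_α⁻¹(C) ⊆ Z is disconnected if and only if there exists α̂ ≥ α such that f_{αα̂}⁻¹(C) ⊆ K_{α̂} is disconnected. -/
open Set Topology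

/-!
The projections `Z → K_i` of an inverse limit of compact spaces with surjective bonding maps are
surjective, and `π_β⁻¹ (f_{αβ}⁻¹ C) = π_α⁻¹ C`; so `π_β` maps `π_α⁻¹ C` onto `f_{αβ}⁻¹ C`, and a
disconnection of `f_{αβ}⁻¹ C` lifts to `Z`. Conversely, split `π_α⁻¹ C` into disjoint closed, hence
compact, pieces `A` and `B`. The closed sets `{(a, b) ∈ A × B | a_β = b_β}` decrease in `β` and have
empty intersection, so by compactness `π_β A` and `π_β B` are disjoint for large `β`; being compact,
they disconnect `f_{αβ}⁻¹ C`.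
-/

/-- The inverse limit of an inverse system of spaces over a preordered index type:
the subspace of the product consisting of all threads. -/
def InvLimit {ι : Type*} [Preorder ι] (K : ι → Type*) (f : ∀ i j : ι, i ≤ j → K j → K i) :
    Type _ :=
  {x : ∀ i, K i // ∀ (i j : ι) (h : i ≤ j), f i j h (x j) = x i}

instance {ι : Type*} [Preorder ι] (K : ι → Type*) [∀ i, TopologicalSpace (K i)]
    (f : ∀ i j : ι, i ≤ j → K j → K i) : TopologicalSpace (InvLimit K f) :=
  inferInstanceAs
    (TopologicalSpace {x : ∀ i, K i // ∀ (i j : ι) (h : i ≤ j), f i j h (x j) = x i})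

namespace InvLimit

variable {ι : Type*} [Preorder ι] {K : ι → Type*} {f : ∀ i j : ι, i ≤ j → K j → K i}

def proj (i : ι) (z : InvLimit K f) : K i := z.1 i

theorem map_proj {i j : ι} (h : i ≤ j) (z : InvLimit K f) : f i j h (proj j z) = proj i z :=
  z.2 i j h

theorem preimage_proj_preimage {i j : ι} (h : i ≤ j) (C : Set (K i)) :
    proj (f := f) j ⁻¹' (f i j h ⁻¹' C) = proj i ⁻¹' C := by
  ext z
  simp only [mem_preimage, map_proj]

def threadsBelow (f : ∀ i j : ι, i ≤ j → K j → K i) (j : ι) : Set (∀ i, K i) :=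
  {x | ∀ (i : ι) (h : i ≤ j), f i j h (x j) = x i}

theorem threadsBelow_antitone
    (hcomp : ∀ (i j k : ι) (hij : i ≤ j) (hjk : j ≤ k) (x : K k),
      f i j hij (f j k hjk x) = f i k (le_trans hij hjk) x)
    {j k : ι} (hjk : j ≤ k) : threadsBelow f k ⊆ threadsBelow f j := by
  intro x hx i hij
  rw [← hx j hjk, hcomp, hx]

variable [∀ i, TopologicalSpace (K i)]

theorem continuous_proj (i : ι) : Continuous (proj (f := f) i) :=
  (continuous_apply i).comp continuous_subtype_val

variable [∀ i, T2Space (K i)]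

theorem isClosed_threadsBelow (hcont : ∀ (i j : ι) (h : i ≤ j), Continuous (f i j h)) (j : ι) :
    IsClosed (threadsBelow f j) := by
  simp only [threadsBelow, ofPred_forall]
  exact isClosed_iInter fun i => isClosed_iInter fun h =>
    isClosed_eq ((hcont i j h).comp (continuous_apply j)) (continuous_apply i)

theorem compactSpace [∀ i, CompactSpace (K i)]
    (hcont : ∀ (i j : ι) (h : i ≤ j), Continuous (f i j h)) : CompactSpace (InvLimit K f) := by
  have hclosed : IsClosed (⋂ j, threadsBelow f j) := isClosed_iInter (isClosed_threadsBelow hcont)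
  have hthreads : (⋂ j, threadsBelow f j) = {x | ∀ (i j : ι) (h : i ≤ j), f i j h (x j) = x i} := by
    ext x
    simp only [threadsBelow, mem_iInter, mem_ofPred_eq]
    exact forall_comm
  rw [hthreads] at hclosed
  exact isCompact_iff_compactSpace.mp hclosed.isCompact

theorem surjective_proj [IsDirected ι (· ≤ ·)] [∀ i, CompactSpace (K i)]
    (hcomp : ∀ (i j k : ι) (hij : i ≤ j) (hjk : j ≤ k) (x : K k),
      f i j hij (f j k hjk x) = f i k (le_trans hij hjk) x)
    (hcont : ∀ (i j : ι) (h : i ≤ j), Continuous (f i j h))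
    (hsurj : ∀ (i j : ι) (h : i ≤ j), Function.Surjective (f i j h)) (i : ι) :
    Function.Surjective (proj (f := f) i) := by
  classical
  intro y
  have : ∀ k, Nonempty (K k) := fun k =>
    let ⟨l, hkl, hil⟩ := exists_ge_ge k i
    ⟨f k l hkl (hsurj i l hil y).choose⟩
  let t : {j // i ≤ j} → Set (∀ k, K k) := fun j => threadsBelow f j.1 ∩ {x | x i = y}
  have ht_nonempty : ∀ j, (t j).Nonempty := by
    rintro ⟨j, hij⟩
    obtain ⟨w, hw⟩ := hsurj i j hij y
    refine ⟨fun k => if h : k ≤ j then f k j h w else Classical.arbitrary (K k), ?_, ?_⟩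
    · intro k hkj
      dsimp only
      rw [dif_pos le_rfl, dif_pos hkj, hcomp]
    · show dite _ _ _ = y
      rw [dif_pos hij, hw]
  have ht_closed : ∀ j, IsClosed (t j) := fun j =>
    (isClosed_threadsBelow hcont j.1).inter (isClosed_eq (continuous_apply i) continuous_const)
  have ht_directed : Directed (· ⊇ ·) t := by
    intro j₁ j₂
    obtain ⟨l, h₁, h₂⟩ := exists_ge_ge j₁.1 j₂.1
    exact ⟨⟨l, j₁.2.trans h₁⟩, inter_subset_inter_left _ (threadsBelow_antitone hcomp h₁),
      inter_subset_inter_left _ (threadsBelow_antitone hcomp h₂)⟩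
  have : Nonempty {j // i ≤ j} := ⟨⟨i, le_rfl⟩⟩
  obtain ⟨x, hx⟩ := IsCompact.nonempty_iInter_of_directed_nonempty_isCompact_isClosed t
    ht_directed ht_nonempty (fun j => (ht_closed j).isCompact) ht_closed
  simp only [t, mem_iInter, mem_inter_iff] at hx
  have hthread : ∀ (k l : ι) (h : k ≤ l), f k l h (x l) = x k := by
    intro k l hkl
    obtain ⟨m, hlm, him⟩ := exists_ge_ge l i
    have hm := (hx ⟨m, him⟩).1
    rw [← hm l hlm, hcomp, hm]
  exact ⟨⟨x, hthread⟩, (hx ⟨i, le_rfl⟩).2⟩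

theorem eventually_disjoint_image_proj [IsDirected ι (· ≤ ·)] [Nonempty ι]
    {A B : Set (InvLimit K f)} (hA : IsCompact A) (hB : IsCompact B) (hAB : Disjoint A B) :
    ∀ᶠ j in Filter.atTop, Disjoint (proj j '' A) (proj j '' B) := by
  let D : ι → Set (InvLimit K f × InvLimit K f) := fun j => {p | proj j p.1 = proj j p.2}
  have hD_mono : ∀ {j k : ι}, j ≤ k → D k ⊆ D j := fun hjk p hp =>
    (map_proj hjk p.1).symm.trans ((congrArg _ hp).trans (map_proj hjk p.2))
  have hD_closed : ∀ j, IsClosed (D j) := fun j =>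
    isClosed_eq ((continuous_proj j).comp continuous_fst) ((continuous_proj j).comp continuous_snd)
  have hD_empty : A ×ˢ B ∩ ⋂ j, D j = ∅ := by
    refine eq_empty_of_forall_notMem fun ⟨a, b⟩ ⟨⟨ha, hb⟩, hab⟩ => ?_
    have : a = b := Subtype.ext (funext fun j => mem_iInter.mp hab j)
    exact hAB.ne_of_mem ha hb this
  obtain ⟨j, hj⟩ := (hA.prod hB).elim_directed_family_closed D hD_closed hD_empty
    (directed_of_isDirected_le fun _ _ => hD_mono)
  refine Filter.eventually_atTop.mpr ⟨j, fun k hjk => ?_⟩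
  rw [disjoint_iff_forall_ne]
  rintro _ ⟨a, ha, rfl⟩ _ ⟨b, hb, rfl⟩ hab
  exact (eq_empty_iff_forall_notMem.mp hj) (a, b) ⟨⟨ha, hb⟩, hD_mono hjk hab⟩

theorem isPreconnected_of_eventually_isPreconnected_image_proj [IsDirected ι (· ≤ ·)]
    [Nonempty ι] [CompactSpace (InvLimit K f)] {S : Set (InvLimit K f)} (hS : IsClosed S)
    (hconn : ∀ᶠ j in Filter.atTop, IsPreconnected (proj j '' S)) : IsPreconnected S := by
  rw [isPreconnected_closed_iff]
  intro t t' ht ht' hcover hSt hSt'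
  by_contra hdisj
  have hAB : Disjoint (S ∩ t) (S ∩ t') := by
    rw [disjoint_iff_inter_eq_empty, inter_inter_inter_comm, inter_self,
      ← not_nonempty_iff_eq_empty]
    exact hdisj
  have hA : IsCompact (S ∩ t) := (hS.inter ht).isCompact
  have hB : IsCompact (S ∩ t') := (hS.inter ht').isCompact
  obtain ⟨j, hj_conn, hj_disj⟩ :=
    (hconn.and (eventually_disjoint_image_proj hA hB hAB)).exists
  have hcover_j : proj j '' S ⊆ proj j '' (S ∩ t) ∪ proj j '' (S ∩ t') := by
    rw [← image_union, ← inter_union_distrib_left, inter_eq_self_of_subset_left hcover]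
  obtain ⟨_, -, hA_j, hB_j⟩ := isPreconnected_closed_iff.mp hj_conn _ _
    (hA.image (continuous_proj j)).isClosed (hB.image (continuous_proj j)).isClosed hcover_j
    ((hSt.image _).mono (subset_inter (image_mono inter_subset_left) subset_rfl))
    ((hSt'.image _).mono (subset_inter (image_mono inter_subset_left) subset_rfl))
  exact hj_disj.ne_of_mem hA_j hB_j rfl

end InvLimit

theorem invLimit_preimage_disconnected_iff_general
    {ι : Type*} [PartialOrder ι] [IsDirected ι (· ≤ ·)] [Nonempty ι]
    (K : ι → Type*) [∀ i, MetricSpace (K i)] [∀ i, CompactSpace (K i)]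
    (f : ∀ i j : ι, i ≤ j → K j → K i)
    (hcomp : ∀ (i j k : ι) (hij : i ≤ j) (hjk : j ≤ k) (x : K k),
      f i j hij (f j k hjk x) = f i k (le_trans hij hjk) x)
    (hcont : ∀ (i j : ι) (h : i ≤ j), Continuous (f i j h))
    (hsurj : ∀ (i j : ι) (h : i ≤ j), Function.Surjective (f i j h))
    (α : ι) (C : Set (K α)) (hC : IsClosed C) :
    ¬ IsPreconnected {z : InvLimit K f | z.1 α ∈ C} ↔
      ∃ (β : ι) (h : α ≤ β), ¬ IsPreconnected (f α β h ⁻¹' C) := by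
  have himage : ∀ β (h : α ≤ β),
      InvLimit.proj β '' {z : InvLimit K f | z.1 α ∈ C} = f α β h ⁻¹' C := fun β h => by
    rw [show {z : InvLimit K f | z.1 α ∈ C} = InvLimit.proj α ⁻¹' C from rfl,
      ← InvLimit.preimage_proj_preimage h,
      image_preimage_eq _ (InvLimit.surjective_proj hcomp hcont hsurj β)]
  have := InvLimit.compactSpace (K := K) hcont
  constructor
  · contrapose!
    intro hconn
    refine InvLimit.isPreconnected_of_eventually_isPreconnected_image_proj
      (hC.preimage (InvLimit.continuous_proj α)) ?_
    filter_upwards [Filter.eventually_ge_atTop α] with β hβ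
    rw [himage β hβ]
    exact hconn β hβ
  · rintro ⟨β, hβ, hdisc⟩ hconn
    exact hdisc (himage β hβ ▸ hconn.image _ (InvLimit.continuous_proj β).continuousOn)

/-- Let `(K_α, f_{αα'})` be an inverse system, over a nonempty directed
poset, of nonempty compact metric spaces with continuous surjective bonding maps, with
inverse limit `Z`, and let `C ⊆ K_α` be closed.  Then the preimage of `C` in `Z` is
disconnected iff `f_{αα̂} ⁻¹' C` is disconnected for some `α̂ ≥ α`. -/
theorem invLimit_preimage_disconnected_iff
    {ι : Type*} [PartialOrder ι] [IsDirected ι (· ≤ ·)] [Nonempty ι]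
    (K : ι → Type*) [∀ i, MetricSpace (K i)] [∀ i, CompactSpace (K i)] [∀ i, Nonempty (K i)]
    (f : ∀ i j : ι, i ≤ j → K j → K i)
    (hid : ∀ (i : ι) (x : K i), f i i le_rfl x = x)
    (hcomp : ∀ (i j k : ι) (hij : i ≤ j) (hjk : j ≤ k) (x : K k),
      f i j hij (f j k hjk x) = f i k (le_trans hij hjk) x)
    (hcont : ∀ (i j : ι) (h : i ≤ j), Continuous (f i j h))
    (hsurj : ∀ (i j : ι) (h : i ≤ j), Function.Surjective (f i j h))
    (α : ι) (C : Set (K α)) (hC : IsClosed C) :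
    ¬ IsPreconnected {z : InvLimit K f | z.1 α ∈ C} ↔
      ∃ (β : ι) (h : α ≤ β), ¬ IsPreconnected (f α β h ⁻¹' C) :=
  invLimit_preimage_disconnected_iff_general K f hcomp hcont hsurj α C hC
end
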